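/- arXiv:0909.2293 — 2 statements merged into one kernel-verified Lean document; each statement's English description precedes it below -/
import Mathlib

section
/- Fix λ ∈ (0, λ₀). There exist a constant C > 0 and a function N₁ : ℕ → ℕ, depending only on d, M₀, M₁, λ, with the following property. Let ω ∈ Ω, let μ be a finite-volume Gibbs measure on [n₁,n₂] for ω, and let r ∈ ℕ and n ∈ [n₁,n₂] satisfy: μ{γ : γ(n₁) ∈ B_r and γ(n₂) ∈ B_r} = 1; for all k ≥ r, Σ_{j=n+1}^{n+k} ξ_j(ω) > k(M₁ + λ + log(2d+1)) and Σ_{j=n−k+1}^{n} ξ_j(ω) > k(M₁ + λ + log(2d+1)); n₂ − n > N₁(r); and n − n₁ > N₁(r). Then μ{γ : |γ(n)| > r} < C·e^{−2λr}. -/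
open MeasureTheory Filter

namespace BKpaper

abbrev X (d : ℕ) := Fin d → ℤ

/-- the max-norm |x| = max_i |x_i|, as a natural number -/
def nm {d : ℕ} (x : X d) : ℕ := Finset.univ.sup fun i => (x i).natAbs

/-- spin value of a boolean: `true ↦ 1`, `false ↦ -1` -/
def sgn (b : Bool) : ℝ := if b then 1 else -1

/-- ξ_m(ω) = M₀ if ω_m = 1, ξ_m(ω) = −M₁ if ω_m = −1 -/
def xi (M₀ M₁ : ℝ) (ω : ℤ → Bool) (m : ℤ) : ℝ := if ω m then M₀ else -M₁

/-- one admissible step of the lazy random walk -/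
def stepOK {d : ℕ} (x y : X d) : Prop := (∑ i, (y i - x i).natAbs) ≤ 1

/-- admissible path on the (discrete) interval [n₁, n₂] -/
def Adm {d : ℕ} (n₁ n₂ : ℤ) (γ : ℤ → X d) : Prop :=
  ∀ n : ℤ, n₁ ≤ n → n < n₂ → stepOK (γ n) (γ (n + 1))

/-- a path frozen outside [n₁,n₂]; used to represent a path on [n₁,n₂] by a
function on all of ℤ -/
def Frozen {d : ℕ} (n₁ n₂ : ℤ) (γ : ℤ → X d) : Prop :=
  (∀ n : ℤ, n ≤ n₁ → γ n = γ n₁) ∧ (∀ n : ℤ, n₂ ≤ n → γ n = γ n₂)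

/-- Φ_{n₁,n₂}(γ,ω) = Σ_{n=n₁+1}^{n₂} V(γ(n)) ω_n -/
noncomputable def Phi {d : ℕ} (V : X d → ℝ) (ω : ℤ → Bool) (n₁ n₂ : ℤ) (γ : ℤ → X d) : ℝ :=
  ∑ n ∈ Finset.Icc (n₁ + 1) n₂, V (γ n) * sgn (ω n)

/-- the Feynman–Kac operator T^{n₁,n₂}(ω) -/
noncomputable def T {d : ℕ} (V : X d → ℝ) (ω : ℤ → Bool) (n₁ n₂ : ℤ)
    (u : X d → ℝ) (x : X d) : ℝ :=
  ((2 * (d : ℝ) + 1) ^ (n₂ - n₁))⁻¹ *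
    ∑' γ : {γ : ℤ → X d // Adm n₁ n₂ γ ∧ Frozen n₁ n₂ γ ∧ γ n₂ = x},
      Real.exp (Phi V ω n₁ n₂ γ.1) * u (γ.1 n₁)

/-- the partition function Z_{n₁,n₂}(x₁,x₂) -/
noncomputable def Z {d : ℕ} (V : X d → ℝ) (ω : ℤ → Bool) (n₁ n₂ : ℤ) (x₁ x₂ : X d) : ℝ :=
  ∑' γ : {γ : ℤ → X d // Adm n₁ n₂ γ ∧ Frozen n₁ n₂ γ ∧ γ n₁ = x₁ ∧ γ n₂ = x₂},
    Real.exp (Phi V ω n₁ n₂ γ.1)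

/-- the class F(c): nonnegative bounded functions with sup φ ≤ c·φ(0) -/
def Fset (d : ℕ) (c : ℝ) : Set (X d → ℝ) :=
  {φ | (∀ x, 0 ≤ φ x) ∧ ∀ x, φ x ≤ c * φ 0}

/-- P is the i.i.d. Bernoulli(1/2) product measure on {−1,1}^ℤ ≃ ℤ → Bool -/
def IsBernoulli (P : Measure (ℤ → Bool)) : Prop :=
  IsProbabilityMeasure P ∧ ∀ (s : Finset ℤ) (f : ℤ → Bool),
    P {ω | ∀ i ∈ s, ω i = f i} = (1 / 2 : ENNReal) ^ s.card

/-- the shift θ^k -/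
def shift (k : ℤ) (ω : ℤ → Bool) : ℤ → Bool := fun n => ω (k + n)

/-- first standard basis vector e₁ of ℤ^d -/
def e1 (d : ℕ) : X d := fun i => if (i : ℕ) = 0 then 1 else 0

/-- the optimal path γ*: γ*_n = 0 if ω_n = 1, γ*_n = e₁ if ω_n = −1 -/
def gstar (d : ℕ) (ω : ℤ → Bool) : ℤ → X d := fun n => if ω n then 0 else e1 d

/-- the pair (m₁,m₂) is (λ,r)-good for ω -/
def Good (d : ℕ) (M₀ M₁ lam : ℝ) (r : ℕ) (m₁ m₂ : ℤ) (ω : ℤ → Bool) : Prop :=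
  m₁ < m₂ ∧
  (∀ j : ℤ, m₁ + 1 ≤ j → j ≤ m₁ + r → ω j = true) ∧
  (∀ k : ℕ, 1 ≤ k →
    (k : ℝ) * (M₁ + lam + Real.log (2 * (d : ℝ) + 1)) <
      ∑ j ∈ Finset.Icc (m₁ + r + 1) (m₁ + r + k), xi M₀ M₁ ω j) ∧
  (∀ j : ℤ, m₂ - r + 1 ≤ j → j ≤ m₂ → ω j = true) ∧
  (∀ k : ℕ, 1 ≤ k →
    (k : ℝ) * (M₁ + lam + Real.log (2 * (d : ℝ) + 1)) <
      ∑ j ∈ Finset.Icc (m₂ - r - k + 1) (m₂ - r), xi M₀ M₁ ω j)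

/-- the ball B_r ⊆ ℤ^d as a finite set -/
noncomputable def ball (d r : ℕ) : Finset (X d) := Fintype.piFinset fun _ => Finset.Icc (-(r : ℤ)) (r : ℤ)

lemma ball_nonempty (d r : ℕ) : (ball d r).Nonempty :=
  ⟨fun _ => 0, by simp [ball, Fintype.mem_piFinset]⟩

/-- the Hilbert projective (pseudo)metric ρ_r on functions restricted to B_r -/
noncomputable def rho (d r : ℕ) (φ ψ : X d → ℝ) : ℝ :=
  Real.log ((ball d r).sup' (ball_nonempty d r) (fun x => φ x / ψ x) *
            (ball d r).sup' (ball_nonempty d r) (fun x => ψ x / φ x))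

/-- diam_r of a set of functions w.r.t. ρ_r -/
noncomputable def diamr (d r : ℕ) (A : Set (X d → ℝ)) : ℝ :=
  sSup {y | ∃ φ ∈ A, ∃ ψ ∈ A, y = rho d r φ ψ}

/-- the set G(λ,r) (with K₁ explicit): φ ∈ F(2K₁) with sup_{|x|>r} φ ≤ sup_{|x|≤r} φ -/
def Gset (d : ℕ) (K₁ : ℝ) (r : ℕ) : Set (X d → ℝ) :=
  {φ | φ ∈ Fset d (2 * K₁) ∧ ∀ x, r < nm x → ∃ z, nm z ≤ r ∧ φ x ≤ φ z}

/-- the set H(λ,r) (with K₁, K₂ explicit) -/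
def Hset (d : ℕ) (K₁ K₂ : ℝ) (r : ℕ) : Set (X d → ℝ) :=
  {φ | φ ∈ Gset d K₁ r ∧ (⨆ x, φ x) = 1 ∧ ∀ y, nm y ≤ r → 1 / K₂ ≤ φ y}

/-- finite-volume Gibbs measure on [n₁,n₂] for ω (paths represented as
functions ℤ → ℤ^d frozen outside [n₁,n₂]) -/
def FVGibbs (d : ℕ) (V : X d → ℝ) (ω : ℤ → Bool) (n₁ n₂ : ℤ)
    (μ : Measure (ℤ → X d)) : Prop :=
  IsProbabilityMeasure μ ∧
  μ {γ | Adm n₁ n₂ γ ∧ Frozen n₁ n₂ γ} = 1 ∧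
  ∀ γ : ℤ → X d, Adm n₁ n₂ γ →
    μ {α | α n₁ = γ n₁ ∧ α n₂ = γ n₂} ≠ 0 →
    μ {α | ∀ n : ℤ, n₁ ≤ n → n ≤ n₂ → α n = γ n} =
      ENNReal.ofReal (Real.exp (Phi V ω n₁ n₂ γ) / Z V ω n₁ n₂ (γ n₁) (γ n₂)) *
        μ {α | α n₁ = γ n₁ ∧ α n₂ = γ n₂}

/-- (infinite-volume) Gibbs measure for ω -/
def GibbsMeasure (d : ℕ) (V : X d → ℝ) (ω : ℤ → Bool) (μ : Measure (ℤ → X d)) : Prop :=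
  IsProbabilityMeasure μ ∧
  μ {α | ∀ n : ℤ, stepOK (α n) (α (n + 1))} = 1 ∧
  ∀ n₁ n₂ : ℤ, n₁ < n₂ → ∀ γ : ℤ → X d, Adm n₁ n₂ γ →
    μ {α | α n₁ = γ n₁ ∧ α n₂ = γ n₂} ≠ 0 →
    μ {α | ∀ n : ℤ, n₁ ≤ n → n ≤ n₂ → α n = γ n} =
      ENNReal.ofReal (Real.exp (Phi V ω n₁ n₂ γ) / Z V ω n₁ n₂ (γ n₁) (γ n₂)) *
        μ {α | α n₁ = γ n₁ ∧ α n₂ = γ n₂}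

/-- the weak localization condition for a measure on two-sided paths -/
def WeakLoc (d : ℕ) (μ : Measure (ℤ → X d)) : Prop :=
  ∀ ε : ℝ, 0 < ε → ∃ r : ℕ,
    Filter.liminf (fun n : ℤ => μ {α | r < nm (α n)}) Filter.atTop < ENNReal.ofReal ε ∧
    Filter.liminf (fun n : ℤ => μ {α | r < nm (α n)}) Filter.atBot < ENNReal.ofReal ε

/-- normalized positive eigenfunction of the cocycle T -/
def IsEigen (d : ℕ) (V : X d → ℝ) (P : Measure (ℤ → Bool))
    (u : (ℤ → Bool) → X d → ℝ) : Prop :=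
  (∀ x : X d, Measurable fun ω => u ω x) ∧
  ∀ᵐ ω ∂P, (∀ x, 0 < u ω x) ∧ BddAbove (Set.range (u ω)) ∧ (⨆ x, u ω x) = 1 ∧
    ∃ κ : ℝ, 0 < κ ∧ ∀ x, T V ω 0 1 (u ω) x = κ * u (shift 1 ω) x


/-!
A path `γ` with `|γ n| > r` is cut at its last visit to `0` before `n` and its first visit
after `n` (or at `n₁`, `n₂` if there is none); since `|γ|` is `1`-Lipschitz, the cut times
`t₁ < t₂` are at distance more than `r` from `n`. Strictly between them `γ` avoids `0`, so it
collects at most `M₁` per step. Replacing this excursion by the optimal path `γ*` (after walking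
to `0` in `d r` steps when the cut is at an end of the interval) collects `ξ_m` per step, so by
the window condition at `n` the weight grows by a factor `e^{(λ + log (2d+1)) (t₂ - t₁ - 1)}`
up to the boundary walks, whose cost is absorbed by `N₁`. The surgery is at most
`(2d+1)^{t₂-t₁-1}`-to-one for given cut times, so the bad paths with cut times `(t₁, t₂)`
weigh at most `e^{-λ (n - t₁) - λ (t₂ - n - 1)} Z`, and two geometric series give
`C e^{-2λr} Z` for each pair of endpoints. The Gibbs property transfers this bound to `μ`.
-/

section Lattice

variable {d : ℕ}

def l1 (x : X d) : ℕ := ∑ i, (x i).natAbs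

lemma natAbs_le_nm (x : X d) (i : Fin d) : (x i).natAbs ≤ nm x :=
  Finset.le_sup (f := fun i => (x i).natAbs) (Finset.mem_univ i)

lemma nm_le_iff {x : X d} {k : ℕ} : nm x ≤ k ↔ ∀ i, (x i).natAbs ≤ k := by
  simp [nm, Finset.sup_le_iff]

@[simp] lemma nm_zero : nm (0 : X d) = 0 := by simp [nm]

@[simp] lemma l1_zero : l1 (0 : X d) = 0 := by simp [l1]

lemma l1_eq_zero_iff {x : X d} : l1 x = 0 ↔ x = 0 := by
  simp [l1, Finset.sum_eq_zero_iff, funext_iff]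

lemma l1_le_mul_nm (x : X d) : l1 x ≤ d * nm x := by
  simpa [l1] using Finset.sum_le_sum fun i (_ : i ∈ Finset.univ) => natAbs_le_nm x i

lemma mem_ball_iff {r : ℕ} {x : X d} : x ∈ ball d r ↔ nm x ≤ r := by
  simp only [ball, Fintype.mem_piFinset, Finset.mem_Icc, nm_le_iff]
  exact forall_congr' fun i => by omega

lemma stepOK_comm {x y : X d} : stepOK x y ↔ stepOK y x := by
  simp only [stepOK, ← Int.natAbs_neg (y _ - x _), neg_sub]

lemma natAbs_sub_le_one_of_stepOK {x y : X d} (h : stepOK x y) (i : Fin d) :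
    (y i - x i).natAbs ≤ 1 :=
  (Finset.single_le_sum (f := fun i => (y i - x i).natAbs) (fun _ _ => Nat.zero_le _)
    (Finset.mem_univ i)).trans h

lemma nm_le_nm_add_one_of_stepOK {x y : X d} (h : stepOK x y) : nm y ≤ nm x + 1 :=
  nm_le_iff.2 fun i => by
    have := natAbs_sub_le_one_of_stepOK h i
    have := natAbs_le_nm x i
    omega

lemma e1_ne_zero (hd : 1 ≤ d) : e1 d ≠ 0 := fun h => by
  simpa [e1] using congrFun h ⟨0, hd⟩

lemma stepOK_zero_e1 (hd : 1 ≤ d) : stepOK 0 (e1 d) := by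
  have hsum : l1 (e1 d) = 1 := by
    rw [l1, Finset.sum_eq_single (⟨0, hd⟩ : Fin d)] <;> simp +contextual [e1, Fin.ext_iff]
  simpa [stepOK, l1] using hsum.le

lemma stepOK_of_zero_or_e1 (hd : 1 ≤ d) {x y : X d} (hx : x = 0 ∨ x = e1 d)
    (hy : y = 0 ∨ y = e1 d) : stepOK x y := by
  rcases hx with rfl | rfl <;> rcases hy with rfl | rfl
  · simp [stepOK]
  · exact stepOK_zero_e1 hd
  · exact stepOK_comm.1 (stepOK_zero_e1 hd)
  · simp [stepOK]

end Lattice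

section StepToZero

variable {d : ℕ}

noncomputable def stepToZero (x : X d) : X d :=
  if h : ∃ i, x i ≠ 0 then Function.update x h.choose (x h.choose - (x h.choose).sign) else 0

lemma stepToZero_zero : stepToZero (0 : X d) = 0 := by
  simp [stepToZero]

lemma stepOK_stepToZero_and_l1 {x : X d} (hx : x ≠ 0) :
    stepOK x (stepToZero x) ∧ l1 (stepToZero x) + 1 = l1 x := by
  have h : ∃ i, x i ≠ 0 := by simpa [funext_iff] using hx
  simp only [stepToZero, dif_pos h, stepOK, l1]
  set i := h.choose
  have hi : x i ≠ 0 := h.choose_spec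
  have key : (x i - (x i).sign).natAbs + 1 = (x i).natAbs ∧ ((x i).sign).natAbs = 1 := by
    rcases lt_or_gt_of_ne hi with h' | h'
    · rw [Int.sign_eq_neg_one_of_neg h']; omega
    · rw [Int.sign_eq_one_of_pos h']; omega
  constructor
  · rw [Finset.sum_eq_single i (fun j _ hj => by simp [Function.update_of_ne hj]) (by simp)]
    simp [key.2]
  · rw [← Finset.add_sum_erase _ _ (Finset.mem_univ i),
      ← Finset.add_sum_erase _ (fun j => (x j).natAbs) (Finset.mem_univ i),
      Finset.sum_congr rfl fun j hj => by rw [Function.update_of_ne (Finset.ne_of_mem_erase hj)]]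
    simp only [Function.update_self]
    omega

lemma stepOK_stepToZero (x : X d) : stepOK x (stepToZero x) := by
  by_cases hx : x = 0
  · subst hx; simp [stepToZero_zero, stepOK]
  · exact (stepOK_stepToZero_and_l1 hx).1

lemma iterate_stepToZero_eq_zero {k : ℕ} {x : X d} (h : l1 x ≤ k) : stepToZero^[k] x = 0 := by
  induction k generalizing x with
  | zero => simpa using l1_eq_zero_iff.1 (Nat.le_zero.1 h)
  | succ k ih =>
    rw [Function.iterate_succ_apply]
    by_cases hx : x = 0
    · subst hx; exact ih (by simp [stepToZero_zero])
    · exact ih (by have := (stepOK_stepToZero_and_l1 hx).2; omega)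

end StepToZero

section Counting

variable {d : ℕ}

noncomputable def unitSteps (d : ℕ) : Finset (X d) :=
  insert 0 ((Finset.univ ×ˢ {1, -1}).image fun p : Fin d × ℤ => Pi.single p.1 p.2)

lemma card_unitSteps : (unitSteps d).card ≤ 2 * d + 1 := by
  refine (Finset.card_insert_le _ _).trans ?_
  have h2 : ({1, -1} : Finset ℤ).card = 2 := by decide
  have := (Finset.card_image_le (s := (Finset.univ : Finset (Fin d)) ×ˢ ({1, -1} : Finset ℤ))
    (f := fun p : Fin d × ℤ => (Pi.single p.1 p.2 : X d)))
  rw [Finset.card_product, Finset.card_univ, Fintype.card_fin, h2] at this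
  omega

lemma sub_mem_unitSteps {x y : X d} (h : stepOK x y) : y - x ∈ unitSteps d := by
  set v := y - x
  have hv : ∑ j, (v j).natAbs ≤ 1 := h
  by_cases hv0 : v = 0
  · rw [hv0]; exact Finset.mem_insert_self _ _
  obtain ⟨i, hi⟩ : ∃ i, v i ≠ 0 := by simpa [funext_iff] using hv0
  have hpair : ∀ j ≠ i, (v i).natAbs + (v j).natAbs ≤ 1 := fun j hj =>
    (Finset.sum_pair hj.symm).symm.le.trans
      ((Finset.sum_le_sum_of_subset (Finset.subset_univ _)).trans hv)
  refine Finset.mem_insert_of_mem (Finset.mem_image.2 ⟨(i, v i), ?_, ?_⟩)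
  · have := (hpair i).mt
    simp only [Finset.mem_product, Finset.mem_univ, Finset.mem_insert, Finset.mem_singleton,
      true_and]
    have hle : (v i).natAbs ≤ 1 :=
      (Finset.single_le_sum (f := fun j => (v j).natAbs) (fun _ _ => Nat.zero_le _)
        (Finset.mem_univ i)).trans hv
    omega
  · funext j
    by_cases hj : j = i
    · subst hj; simp
    · have := hpair j hj
      have : (v i).natAbs ≠ 0 := by simpa using hi
      simp only [Pi.single_apply, hj, if_false]
      omega

def stepSeq (t₁ t₂ : ℤ) (γ : ℤ → X d) : Fin (t₂ - t₁ - 1).toNat → X d :=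
  fun j => γ (t₁ + j + 1) - γ (t₁ + j)

lemma injOn_stepSeq (t₁ t₂ : ℤ) (η : ℤ → X d) :
    Set.InjOn (stepSeq t₁ t₂) {γ | ∀ m, m ≤ t₁ ∨ t₂ ≤ m → γ m = η m} := by
  intro γ hγ γ' hγ' heq
  have hin : ∀ m, t₁ ≤ m → m ≤ t₂ - 1 → γ m = γ' m := by
    intro m hm
    induction m, hm using Int.leInduction with
    | base => exact fun _ => (hγ t₁ (.inl le_rfl)).trans (hγ' t₁ (.inl le_rfl)).symm
    | succ m hm ih =>
      intro hm'
      have hj := congrFun heq ⟨(m - t₁).toNat, by omega⟩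
      simp only [stepSeq, Int.toNat_of_nonneg (sub_nonneg.2 hm), add_sub_cancel] at hj
      rw [ih (by omega)] at hj
      simpa using hj
  funext m
  by_cases hout : m ≤ t₁ ∨ t₂ ≤ m
  · exact (hγ m hout).trans (hγ' m hout).symm
  · exact hin m (by omega) (by omega)

lemma stepSeq_mem_piFinset {n₁ n₂ t₁ t₂ : ℤ} {γ : ℤ → X d} (hγ : Adm n₁ n₂ γ)
    (h₁ : n₁ ≤ t₁) (h₂ : t₂ ≤ n₂) :
    stepSeq t₁ t₂ γ ∈ Fintype.piFinset fun _ => unitSteps d :=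
  Fintype.mem_piFinset.2 fun j => sub_mem_unitSteps (hγ _ (by omega) (by omega))

lemma card_le_of_eqOn_compl_Ioo {n₁ n₂ t₁ t₂ : ℤ} (η : ℤ → X d) (s : Finset (ℤ → X d))
    (h₁ : n₁ ≤ t₁) (h₂ : t₂ ≤ n₂)
    (hs : ∀ γ ∈ s, Adm n₁ n₂ γ ∧ ∀ m, m ≤ t₁ ∨ t₂ ≤ m → γ m = η m) :
    s.card ≤ (2 * d + 1) ^ (t₂ - t₁ - 1).toNat := by
  calc s.card ≤ (Fintype.piFinset fun _ : Fin (t₂ - t₁ - 1).toNat => unitSteps d).card :=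
        Finset.card_le_card_of_injOn _
          (fun γ hγ => stepSeq_mem_piFinset (hs γ hγ).1 h₁ h₂)
          ((injOn_stepSeq t₁ t₂ η).mono fun γ hγ => (hs γ hγ).2)
    _ ≤ (2 * d + 1) ^ (t₂ - t₁ - 1).toNat := by
        rw [Fintype.card_piFinset, Finset.prod_const, Finset.card_univ, Fintype.card_fin]
        exact Nat.pow_le_pow_left card_unitSteps _

end Counting

section Paths

variable {d : ℕ} {n₁ n₂ : ℤ}

lemma abs_nm_sub_nm_le_of_adm {γ : ℤ → X d} (hγ : Adm n₁ n₂ γ) {u v : ℤ} (hu : n₁ ≤ u)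
    (huv : u ≤ v) (hv : v ≤ n₂) : |(nm (γ v) : ℤ) - nm (γ u)| ≤ v - u := by
  induction v, huv using Int.leInduction with
  | base => simp
  | succ v huv ih =>
    have hstep := hγ v (by omega) (by omega)
    have h₁ := nm_le_nm_add_one_of_stepOK hstep
    have h₂ := nm_le_nm_add_one_of_stepOK (stepOK_comm.1 hstep)
    have := abs_le.1 (ih (by omega))
    exact abs_le.2 ⟨by omega, by omega⟩

def PathSet (d : ℕ) (n₁ n₂ : ℤ) (x₁ x₂ : X d) : Set (ℤ → X d) :=
  {γ | Adm n₁ n₂ γ ∧ Frozen n₁ n₂ γ ∧ γ n₁ = x₁ ∧ γ n₂ = x₂}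

lemma pathSet_finite (x₁ x₂ : X d) : (PathSet d n₁ n₂ x₁ x₂).Finite := by
  rcases (PathSet d n₁ n₂ x₁ x₂).eq_empty_or_nonempty with h | ⟨η, hη⟩
  · simp [h]
  have hagree : PathSet d n₁ n₂ x₁ x₂ ⊆ {γ | ∀ m, m ≤ n₁ ∨ n₂ ≤ m → γ m = η m} := by
    rintro γ ⟨-, hF, h₁, h₂⟩ m (hm | hm)
    · rw [hF.1 m hm, hη.2.1.1 m hm, h₁, hη.2.2.1]
    · rw [hF.2 m hm, hη.2.1.2 m hm, h₂, hη.2.2.2]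
  refine Set.Finite.of_finite_image ?_ ((injOn_stepSeq n₁ n₂ η).mono hagree)
  refine (Fintype.piFinset fun _ => unitSteps d).finite_toSet.subset ?_
  rintro _ ⟨γ, hγ, rfl⟩
  exact stepSeq_mem_piFinset hγ.1 le_rfl le_rfl

noncomputable def paths (d : ℕ) (n₁ n₂ : ℤ) (x₁ x₂ : X d) : Finset (ℤ → X d) :=
  (pathSet_finite (n₁ := n₁) (n₂ := n₂) x₁ x₂).toFinset

lemma mem_paths {x₁ x₂ : X d} {γ : ℤ → X d} :
    γ ∈ paths d n₁ n₂ x₁ x₂ ↔ Adm n₁ n₂ γ ∧ Frozen n₁ n₂ γ ∧ γ n₁ = x₁ ∧ γ n₂ = x₂ :=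
  Set.Finite.mem_toFinset _

lemma Z_eq_sum (V : X d → ℝ) (ω : ℤ → Bool) (x₁ x₂ : X d) :
    Z V ω n₁ n₂ x₁ x₂ = ∑ γ ∈ paths d n₁ n₂ x₁ x₂, Real.exp (Phi V ω n₁ n₂ γ) := by
  rw [← Finset.tsum_subtype', paths, Set.Finite.coe_toFinset]
  rfl

lemma Z_nonneg (V : X d → ℝ) (ω : ℤ → Bool) (x₁ x₂ : X d) : 0 ≤ Z V ω n₁ n₂ x₁ x₂ := by
  rw [Z_eq_sum]
  exact Finset.sum_nonneg fun _ _ => (Real.exp_pos _).le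

end Paths

section Surgery

variable {d : ℕ}

noncomputable def lastZero (n₁ n : ℤ) (γ : ℤ → X d) : ℤ :=
  (insert n₁ ((Finset.Icc n₁ n).filter (γ · = 0))).max' (Finset.insert_nonempty _ _)

noncomputable def firstZero (n n₂ : ℤ) (γ : ℤ → X d) : ℤ :=
  (insert n₂ ((Finset.Ioc n n₂).filter (γ · = 0))).min' (Finset.insert_nonempty _ _)

lemma lastZero_spec {n₁ n : ℤ} (γ : ℤ → X d) (h : n₁ ≤ n) :
    n₁ ≤ lastZero n₁ n γ ∧ lastZero n₁ n γ ≤ n ∧ (γ (lastZero n₁ n γ) = 0 ∨ lastZero n₁ n γ = n₁) ∧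
      ∀ m, lastZero n₁ n γ < m → m ≤ n → γ m ≠ 0 := by
  have hmem : lastZero n₁ n γ ∈ insert n₁ ((Finset.Icc n₁ n).filter (γ · = 0)) :=
    Finset.max'_mem _ _
  have hle : ∀ m ∈ insert n₁ ((Finset.Icc n₁ n).filter (γ · = 0)), m ≤ lastZero n₁ n γ :=
    fun m hm => Finset.le_max' _ m hm
  simp only [Finset.mem_insert, Finset.mem_filter, Finset.mem_Icc] at hmem hle
  refine ⟨hle n₁ (.inl rfl), by rcases hmem with h' | h' <;> omega, by tauto,
    fun m hm hmn hm0 => ?_⟩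
  have := hle m (.inr ⟨⟨by have := hle n₁ (.inl rfl); omega, hmn⟩, hm0⟩)
  omega

lemma firstZero_spec {n n₂ : ℤ} (γ : ℤ → X d) (h : n < n₂) :
    n < firstZero n n₂ γ ∧ firstZero n n₂ γ ≤ n₂ ∧
      (γ (firstZero n n₂ γ) = 0 ∨ firstZero n n₂ γ = n₂) ∧
      ∀ m, n < m → m < firstZero n n₂ γ → γ m ≠ 0 := by
  have hmem : firstZero n n₂ γ ∈ insert n₂ ((Finset.Ioc n n₂).filter (γ · = 0)) :=
    Finset.min'_mem _ _
  have hle : ∀ m ∈ insert n₂ ((Finset.Ioc n n₂).filter (γ · = 0)), firstZero n n₂ γ ≤ m :=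
    fun m hm => Finset.min'_le _ m hm
  simp only [Finset.mem_insert, Finset.mem_filter, Finset.mem_Ioc] at hmem hle
  refine ⟨by rcases hmem with h' | h' <;> omega, hle n₂ (.inl rfl), by tauto,
    fun m hm hmn hm0 => ?_⟩
  have := hle m (.inr ⟨⟨hm, by have := hle n₂ (.inl rfl); omega⟩, hm0⟩)
  omega

noncomputable def surgery (ω : ℤ → Bool) (t₁ t₂ a b : ℤ) (γ : ℤ → X d) : ℤ → X d := fun m =>
  if m ≤ t₁ ∨ t₂ ≤ m then γ m
  else if m ≤ a then stepToZero^[(m - t₁).toNat] (γ t₁)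
  else if m < b then gstar d ω m
  else stepToZero^[(t₂ - m).toNat] (γ t₂)

variable {ω : ℤ → Bool} {t₁ t₂ a b : ℤ} {γ : ℤ → X d}

lemma surgery_of_out {m : ℤ} (hm : m ≤ t₁ ∨ t₂ ≤ m) : surgery ω t₁ t₂ a b γ m = γ m :=
  if_pos hm

lemma surgery_travelIn (hat : a < t₂) {m : ℤ} (hm : t₁ ≤ m) (hma : m ≤ a) :
    surgery ω t₁ t₂ a b γ m = stepToZero^[(m - t₁).toNat] (γ t₁) := by
  rcases hm.eq_or_lt with rfl | hm
  · simp [surgery]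
  · simp only [surgery, if_neg (show ¬(m ≤ t₁ ∨ t₂ ≤ m) by omega), if_pos hma]

lemma surgery_travelOut (hta : t₁ ≤ a) (hab : a < b) {m : ℤ} (hbm : b ≤ m) (hm : m ≤ t₂) :
    surgery ω t₁ t₂ a b γ m = stepToZero^[(t₂ - m).toNat] (γ t₂) := by
  rcases hm.eq_or_lt with rfl | hm
  · simp [surgery]
  · simp only [surgery, if_neg (show ¬(m ≤ t₁ ∨ t₂ ≤ m) by omega),
      if_neg (show ¬m ≤ a by omega), if_neg (show ¬m < b by omega)]

lemma surgery_mid (hta : t₁ ≤ a) (hbt : b ≤ t₂) {m : ℤ} (ham : a < m) (hmb : m < b) :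
    surgery ω t₁ t₂ a b γ m = gstar d ω m := by
  simp only [surgery, if_neg (show ¬(m ≤ t₁ ∨ t₂ ≤ m) by omega),
    if_neg (show ¬m ≤ a by omega), if_pos hmb]

lemma surgery_eq_zero_or_e1 (hta : t₁ ≤ a) (hab : a < b) (hbt : b ≤ t₂)
    (hl₁ : (l1 (γ t₁) : ℤ) ≤ a - t₁) (hl₂ : (l1 (γ t₂) : ℤ) ≤ t₂ - b) {m : ℤ} (ham : a ≤ m)
    (hmb : m ≤ b) : surgery ω t₁ t₂ a b γ m = 0 ∨ surgery ω t₁ t₂ a b γ m = e1 d := by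
  rcases ham.eq_or_lt with rfl | ham
  · exact .inl <| (surgery_travelIn (by omega) hta le_rfl).trans
      (iterate_stepToZero_eq_zero (by omega))
  rcases hmb.eq_or_lt with rfl | hmb
  · exact .inl <| (surgery_travelOut hta hab le_rfl hbt).trans
      (iterate_stepToZero_eq_zero (by omega))
  rw [surgery_mid hta hbt ham hmb, gstar]
  split_ifs
  · exact .inl rfl
  · exact .inr rfl

lemma adm_surgery (hd : 1 ≤ d) {n₁ n₂ : ℤ} (hγ : Adm n₁ n₂ γ) (hta : t₁ ≤ a) (hab : a < b)
    (hbt : b ≤ t₂) (hl₁ : (l1 (γ t₁) : ℤ) ≤ a - t₁) (hl₂ : (l1 (γ t₂) : ℤ) ≤ t₂ - b) :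
    Adm n₁ n₂ (surgery ω t₁ t₂ a b γ) := by
  intro m hm₁ hm₂
  rcases (by omega : m + 1 ≤ t₁ ∨ t₂ ≤ m ∨ (t₁ ≤ m ∧ m + 1 ≤ a) ∨ (a ≤ m ∧ m + 1 ≤ b) ∨
      (b ≤ m ∧ m + 1 ≤ t₂)) with h | h | h | h | h
  · rw [surgery_of_out (.inl (by omega)), surgery_of_out (.inl h)]
    exact hγ m hm₁ hm₂
  · rw [surgery_of_out (.inr h), surgery_of_out (.inr (by omega))]
    exact hγ m hm₁ hm₂
  · rw [surgery_travelIn (by omega) h.1 (by omega), surgery_travelIn (by omega) (by omega) h.2,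
      show (m + 1 - t₁).toNat = (m - t₁).toNat + 1 by omega, Function.iterate_succ_apply']
    exact stepOK_stepToZero _
  · exact stepOK_of_zero_or_e1 hd (surgery_eq_zero_or_e1 hta hab hbt hl₁ hl₂ h.1 (by omega))
      (surgery_eq_zero_or_e1 hta hab hbt hl₁ hl₂ (by omega) h.2)
  · rw [surgery_travelOut hta hab h.1 (by omega), surgery_travelOut hta hab (by omega) h.2,
      show (t₂ - m).toNat = (t₂ - (m + 1)).toNat + 1 by omega, Function.iterate_succ_apply']
    exact stepOK_comm.1 (stepOK_stepToZero _)

lemma surgery_mem_pathSet (hd : 1 ≤ d) {n₁ n₂ : ℤ} {x₁ x₂ : X d}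
    (hγ : γ ∈ PathSet d n₁ n₂ x₁ x₂) (h₁ : n₁ ≤ t₁) (hta : t₁ ≤ a) (hab : a < b)
    (hbt : b ≤ t₂) (h₂ : t₂ ≤ n₂) (hl₁ : (l1 (γ t₁) : ℤ) ≤ a - t₁)
    (hl₂ : (l1 (γ t₂) : ℤ) ≤ t₂ - b) :
    surgery ω t₁ t₂ a b γ ∈ PathSet d n₁ n₂ x₁ x₂ := by
  obtain ⟨hA, hF, hx₁, hx₂⟩ := hγ
  refine ⟨adm_surgery hd hA hta hab hbt hl₁ hl₂, ⟨fun m hm => ?_, fun m hm => ?_⟩, ?_, ?_⟩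
  · rw [surgery_of_out (.inl (by omega)), surgery_of_out (.inl h₁), hF.1 m hm]
  · rw [surgery_of_out (.inr (by omega)), surgery_of_out (.inr h₂), hF.2 m hm]
  · rw [surgery_of_out (.inl h₁), hx₁]
  · rw [surgery_of_out (.inr h₂), hx₂]

end Surgery

def GoodAt (d : ℕ) (M₀ M₁ lam : ℝ) (r : ℕ) (ω : ℤ → Bool) (n : ℤ) : Prop :=
  (∀ k : ℕ, r ≤ k → (k : ℝ) * (M₁ + lam + Real.log (2 * (d : ℝ) + 1)) <
      ∑ j ∈ Finset.Icc (n + 1) (n + k), xi M₀ M₁ ω j) ∧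
    ∀ k : ℕ, r ≤ k → (k : ℝ) * (M₁ + lam + Real.log (2 * (d : ℝ) + 1)) <
      ∑ j ∈ Finset.Icc (n - k + 1) n, xi M₀ M₁ ω j

section EnergyGain

variable {d : ℕ} {M₀ M₁ lam : ℝ} {V : X d → ℝ} {ω : ℤ → Bool} {r : ℕ} {n : ℤ}

lemma mul_sgn_le_of_ne_zero (hV1 : ∀ x : X d, x ≠ 0 → |V x| ≤ M₁) {x : X d} (hx : x ≠ 0)
    (s : Bool) : V x * sgn s ≤ M₁ := by
  have := abs_le.1 (hV1 x hx)
  unfold sgn; split_ifs <;> linarith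

lemma neg_le_mul_sgn (hM₀ : 0 ≤ M₀) (hM₁ : 0 ≤ M₁) (hV0 : V 0 = M₀)
    (hV1 : ∀ x : X d, x ≠ 0 → |V x| ≤ M₁) (x : X d) (s : Bool) : -(M₀ + M₁) ≤ V x * sgn s := by
  have : |V x| ≤ M₀ + M₁ := by
    by_cases hx : x = 0
    · rw [hx, hV0, abs_of_nonneg hM₀]; linarith
    · linarith [hV1 x hx]
  have := abs_le.1 this
  unfold sgn; split_ifs <;> linarith

lemma xi_le_mul_sgn_gstar (hd : 1 ≤ d) (hV0 : V 0 = M₀) (hV1 : ∀ x : X d, x ≠ 0 → |V x| ≤ M₁)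
    (m : ℤ) : xi M₀ M₁ ω m ≤ V (gstar d ω m) * sgn (ω m) := by
  unfold xi gstar sgn
  cases ω m
  · have := (abs_le.1 (hV1 _ (e1_ne_zero hd))).2
    simp only [Bool.false_eq_true, if_false]
    linarith
  · simp [hV0]

lemma Phi_sub_Phi_eq_sum_Ioo {n₁ n₂ t₁ t₂ : ℤ} {γ γ' : ℤ → X d}
    (h : ∀ m, m ≤ t₁ ∨ t₂ ≤ m → γ' m = γ m) (h₁ : n₁ ≤ t₁) (h₂ : t₂ ≤ n₂) :
    Phi V ω n₁ n₂ γ' - Phi V ω n₁ n₂ γ =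
      ∑ m ∈ Finset.Ioo t₁ t₂, (V (γ' m) * sgn (ω m) - V (γ m) * sgn (ω m)) := by
  rw [Phi, Phi, ← Finset.sum_sub_distrib]
  refine (Finset.sum_subset (fun m hm => ?_) fun m _ hm => ?_).symm
  · simp only [Finset.mem_Ioo, Finset.mem_Icc] at hm ⊢; omega
  · rw [h m (by simp only [Finset.mem_Ioo] at hm; omega), sub_self]

lemma mul_le_sum_Ioo_xi_sub (hn : GoodAt d M₀ M₁ lam r ω n)
    {a b : ℤ} (han : r ≤ n - a) (hbn : r ≤ b - 1 - n) :
    ((b - a - 1 : ℤ) : ℝ) * (lam + Real.log (2 * (d : ℝ) + 1)) ≤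
      ∑ m ∈ Finset.Ioo a b, (xi M₀ M₁ ω m - M₁) := by
  obtain ⟨k₁, hk₁⟩ : ∃ k : ℕ, (k : ℤ) = n - a := ⟨(n - a).toNat, by omega⟩
  obtain ⟨k₂, hk₂⟩ : ∃ k : ℕ, (k : ℤ) = b - 1 - n := ⟨(b - 1 - n).toNat, by omega⟩
  have hL := hn.2 k₁ (by omega)
  have hR := hn.1 k₂ (by omega)
  have hsplit : Finset.Ioo a b = Finset.Icc (n - k₁ + 1) n ∪ Finset.Icc (n + 1) (n + k₂) := by
    ext m; simp only [Finset.mem_Ioo, Finset.mem_union, Finset.mem_Icc]; omega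
  have hdisj : Disjoint (Finset.Icc (n - k₁ + 1) n) (Finset.Icc (n + 1) (n + k₂)) :=
    Finset.disjoint_left.2 fun m h₁ h₂ => by
      simp only [Finset.mem_Icc] at h₁ h₂; omega
  have hcard₁ : (Finset.Icc (n - k₁ + 1) n).card = k₁ := by rw [Int.card_Icc]; omega
  have hcard₂ : (Finset.Icc (n + 1) (n + k₂)).card = k₂ := by rw [Int.card_Icc]; omega
  have hba : ((b - a - 1 : ℤ) : ℝ) = k₁ + k₂ := by
    rw [show b - a - 1 = (k₁ : ℤ) + k₂ by omega]; push_cast; ring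
  rw [hsplit, Finset.sum_union hdisj, Finset.sum_sub_distrib, Finset.sum_sub_distrib,
    Finset.sum_const, Finset.sum_const, hcard₁, hcard₂, nsmul_eq_mul, nsmul_eq_mul, hba]
  linarith

lemma Phi_le_Phi_surgery (hd : 1 ≤ d) (hM₀ : 0 ≤ M₀) (hM₁ : 0 ≤ M₁) (hV0 : V 0 = M₀)
    (hV1 : ∀ x : X d, x ≠ 0 → |V x| ≤ M₁)
    (hn : GoodAt d M₀ M₁ lam r ω n)
    {n₁ n₂ t₁ t₂ a b : ℤ} {γ : ℤ → X d} (h₁ : n₁ ≤ t₁) (hta : t₁ ≤ a) (han : r ≤ n - a)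
    (hbn : r ≤ b - 1 - n) (hbt : b ≤ t₂) (h₂ : t₂ ≤ n₂)
    (hz : ∀ m, t₁ < m → m < t₂ → γ m ≠ 0) :
    Phi V ω n₁ n₂ γ + ((b - a - 1 : ℤ) : ℝ) * (lam + Real.log (2 * (d : ℝ) + 1))
        - (M₀ + 2 * M₁) * ((t₂ - t₁ - 1 - (b - a - 1) : ℤ) : ℝ)
      ≤ Phi V ω n₁ n₂ (surgery ω t₁ t₂ a b γ) := by
  have hdiff := Phi_sub_Phi_eq_sum_Ioo (V := V) (ω := ω) (γ' := surgery ω t₁ t₂ a b γ)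
    (fun m hm => surgery_of_out hm) h₁ h₂
  have hterm : ∀ m ∈ Finset.Ioo t₁ t₂,
      (if m ∈ Finset.Ioo a b then xi M₀ M₁ ω m - M₁ else -(M₀ + 2 * M₁)) ≤
        V (surgery ω t₁ t₂ a b γ m) * sgn (ω m) - V (γ m) * sgn (ω m) := by
    intro m hm
    rw [Finset.mem_Ioo] at hm
    have hf := mul_sgn_le_of_ne_zero hV1 (hz m hm.1 hm.2) (ω m)
    split_ifs with hab
    · rw [Finset.mem_Ioo] at hab
      rw [surgery_mid hta hbt hab.1 hab.2]
      linarith [xi_le_mul_sgn_gstar (ω := ω) hd hV0 hV1 m]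
    · linarith [neg_le_mul_sgn hM₀ hM₁ hV0 hV1 (surgery ω t₁ t₂ a b γ m) (ω m)]
  have hfilter : (Finset.Ioo t₁ t₂).filter (· ∈ Finset.Ioo a b) = Finset.Ioo a b := by
    ext m; simp only [Finset.mem_filter, Finset.mem_Ioo]; omega
  have hcard : ((((Finset.Ioo t₁ t₂).filter (· ∉ Finset.Ioo a b)).card : ℕ) : ℝ) =
      ((t₂ - t₁ - 1 - (b - a - 1) : ℤ) : ℝ) := by
    have := Finset.card_filter_add_card_filter_not (s := Finset.Ioo t₁ t₂)
      (· ∈ Finset.Ioo a b)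
    rw [hfilter, Int.card_Ioo, Int.card_Ioo] at this
    exact_mod_cast (by omega : ((((Finset.Ioo t₁ t₂).filter (· ∉ Finset.Ioo a b)).card : ℕ) : ℤ) =
      t₂ - t₁ - 1 - (b - a - 1))
  have hsum := Finset.sum_le_sum hterm
  rw [Finset.sum_ite, hfilter, Finset.sum_const, nsmul_eq_mul, hcard] at hsum
  linarith [mul_le_sum_Ioo_xi_sub hn han hbn]

end EnergyGain

section Sums

variable {lam : ℝ}

lemma sum_exp_neg_mul_le (hlam : 0 < lam) {s : Finset ℤ} {f : ℤ → ℤ} (hf : Set.InjOn f s)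
    {c : ℤ} (hc : ∀ t ∈ s, c ≤ f t) :
    ∑ t ∈ s, Real.exp (-lam * f t) ≤ Real.exp (-lam * c) / (1 - Real.exp (-lam)) := by
  have hρ : Real.exp (-lam) < 1 := Real.exp_lt_one_iff.2 (by linarith)
  have hpow : ∀ t ∈ s,
      Real.exp (-lam * f t) = Real.exp (-lam * c) * Real.exp (-lam) ^ (f t - c).toNat := by
    intro t ht
    have hk : (((f t - c).toNat : ℕ) : ℝ) = f t - c := by
      exact_mod_cast Int.toNat_of_nonneg (sub_nonneg.2 (hc t ht))
    rw [← Real.exp_nat_mul, ← Real.exp_add, hk]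
    ring_nf
  have hinj : Set.InjOn (fun t => (f t - c).toNat) s := fun t ht t' ht' h => hf ht ht' (by
    have := hc t ht; have := hc t' ht'; simp only at h; omega)
  rw [Finset.sum_congr rfl hpow, ← Finset.mul_sum, div_eq_mul_inv,
    ← tsum_geometric_of_lt_one (Real.exp_pos _).le hρ, ← Finset.sum_image hinj]
  gcongr
  exact (summable_geometric_of_lt_one (Real.exp_pos _).le hρ).sum_le_tsum _
    fun _ _ => pow_nonneg (Real.exp_pos _).le _

/-- Time allotted to walk to `0` from a cut at time `t`; a cut anywhere but at the end `t₀` of the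
interval is already at `0`. -/
def travelTime (t₀ D t : ℤ) : ℤ := if t = t₀ then D else 0

lemma sum_exp_travelTime_le (hlam : 0 < lam) {K : ℝ} {s : Finset ℤ} {f : ℤ → ℤ}
    (hf : Set.InjOn f s) {c : ℤ} (hc : ∀ t ∈ s, c ≤ f t) {t₀ D : ℤ}
    (h₀ : K * D - lam * f t₀ ≤ -lam * c) :
    ∑ t ∈ s, Real.exp (K * travelTime t₀ D t - lam * f t) ≤
      (1 + 1 / (1 - Real.exp (-lam))) * Real.exp (-lam * c) := by
  have hterm : ∀ t ∈ s, Real.exp (K * travelTime t₀ D t - lam * f t) ≤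
      Real.exp (-lam * f t) + if t = t₀ then Real.exp (-lam * c) else 0 := by
    intro t _
    unfold travelTime
    split_ifs with ht
    · subst ht
      linarith [Real.exp_le_exp.2 h₀, Real.exp_pos (-lam * f t)]
    · simp [neg_mul]
  calc _ ≤ ∑ t ∈ s, (Real.exp (-lam * f t) + if t = t₀ then Real.exp (-lam * c) else 0) :=
        Finset.sum_le_sum hterm
    _ ≤ Real.exp (-lam * c) / (1 - Real.exp (-lam)) + Real.exp (-lam * c) := by
        rw [Finset.sum_add_distrib, Finset.sum_ite_eq']
        gcongr
        · exact sum_exp_neg_mul_le hlam hf hc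
        · split_ifs <;> simp [(Real.exp_pos _).le]
    _ = _ := by ring

end Sums

lemma sum_le_sum_of_card_fiber_le {α β : Type*} [DecidableEq β] {s : Finset α}
    {t : Finset β} (g : α → β) (hg : ∀ a ∈ s, g a ∈ t) (w : α → ℝ) (W : β → ℝ) (N : β → ℕ)
    (hN : ∀ b ∈ t, (s.filter (g · = b)).card ≤ N b) (hw : ∀ a ∈ s, N (g a) * w a ≤ W (g a))
    (hW : ∀ b ∈ t, 0 ≤ W b) :
    ∑ a ∈ s, w a ≤ ∑ b ∈ t, W b := by
  rw [← Finset.sum_fiberwise_of_maps_to hg]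
  refine Finset.sum_le_sum fun b hb => ?_
  rcases (s.filter (g · = b)).eq_empty_or_nonempty with hF | ⟨a₀, ha₀⟩
  · simpa [hF] using hW b hb
  have hNpos : (0 : ℝ) < N b := by
    have := Finset.card_pos.2 ⟨a₀, ha₀⟩
    exact_mod_cast this.trans_le (hN b hb)
  refine le_of_mul_le_mul_left ?_ hNpos
  calc (N b : ℝ) * ∑ a ∈ s.filter (g · = b), w a
      = ∑ a ∈ s.filter (g · = b), (N (g a) : ℝ) * w a := by
        rw [Finset.mul_sum]
        exact Finset.sum_congr rfl fun a ha => by rw [(Finset.mem_filter.1 ha).2]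
    _ ≤ ∑ _a ∈ s.filter (g · = b), W b :=
        Finset.sum_le_sum fun a ha => by
          obtain ⟨has, hga⟩ := Finset.mem_filter.1 ha
          simpa [hga] using hw a has
    _ ≤ N b * W b := by
        rw [Finset.sum_const, nsmul_eq_mul]
        exact mul_le_mul_of_nonneg_right (by exact_mod_cast hN b hb) (hW b hb)

section BadPaths

variable {d : ℕ} {M₀ M₁ lam : ℝ} {V : X d → ℝ} {ω : ℤ → Bool} {r : ℕ} {n₁ n₂ n : ℤ}

noncomputable def repair (ω : ℤ → Bool) (n₁ n₂ n D : ℤ) (γ : ℤ → X d) : ℤ → X d :=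
  surgery ω (lastZero n₁ n γ) (firstZero n n₂ γ)
    (lastZero n₁ n γ + travelTime n₁ D (lastZero n₁ n γ))
    (firstZero n n₂ γ - travelTime n₂ D (firstZero n n₂ γ)) γ

lemma lastZero_le_and_le_firstZero {γ : ℤ → X d} (hγ : Adm n₁ n₂ γ) (hbad : r < nm (γ n))
    (hleft : (r : ℤ) + 1 ≤ n - n₁) (hright : (r : ℤ) + 1 ≤ n₂ - n) :
    lastZero n₁ n γ ≤ n - r - 1 ∧ n + r + 1 ≤ firstZero n n₂ γ := by
  obtain ⟨h₁, h₁n, h₁z, -⟩ := lastZero_spec γ (show n₁ ≤ n by omega)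
  obtain ⟨h₂n, h₂, h₂z, -⟩ := firstZero_spec γ (show n < n₂ by omega)
  constructor
  · rcases h₁z with hz | hz
    · have := abs_le.1 (abs_nm_sub_nm_le_of_adm hγ h₁ h₁n (by omega))
      rw [hz, nm_zero] at this
      omega
    · omega
  · rcases h₂z with hz | hz
    · have := abs_le.1 (abs_nm_sub_nm_le_of_adm hγ (by omega) h₂n.le h₂)
      rw [hz, nm_zero] at this
      omega
    · omega

lemma l1_le_travelTime {γ : ℤ → X d} {t t₀ D : ℤ} (ht : γ t = 0 ∨ t = t₀)
    (h₀ : (l1 (γ t₀) : ℤ) ≤ D) : (l1 (γ t) : ℤ) ≤ travelTime t₀ D t := by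
  unfold travelTime
  split_ifs with h
  · rwa [h]
  · simp [ht.resolve_right h]

lemma repair_mem_and_exp_Phi_le (hd : 1 ≤ d) (hM₀ : 0 ≤ M₀) (hM₁ : 0 ≤ M₁) (hV0 : V 0 = M₀)
    (hV1 : ∀ x : X d, x ≠ 0 → |V x| ≤ M₁) (hn : GoodAt d M₀ M₁ lam r ω n) {x₁ x₂ : X d}
    (hx₁ : nm x₁ ≤ r) (hx₂ : nm x₂ ≤ r) (hleft : (d : ℤ) * r + r + 1 ≤ n - n₁)
    (hright : (d : ℤ) * r + r + 1 ≤ n₂ - n) {γ : ℤ → X d}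
    (hγ : γ ∈ PathSet d n₁ n₂ x₁ x₂) (hbad : r < nm (γ n)) :
    repair ω n₁ n₂ n (d * r) γ ∈ PathSet d n₁ n₂ x₁ x₂ ∧
      ((2 * d + 1 : ℕ) : ℝ) ^ (firstZero n n₂ γ - lastZero n₁ n γ - 1).toNat *
          Real.exp (Phi V ω n₁ n₂ γ) ≤
        Real.exp ((Real.log (2 * d + 1) + M₀ + 2 * M₁ + lam) *
            travelTime n₁ (d * r) (lastZero n₁ n γ) - lam * ((n - lastZero n₁ n γ : ℤ) : ℝ)) *
          Real.exp ((Real.log (2 * d + 1) + M₀ + 2 * M₁ + lam) *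
            travelTime n₂ (d * r) (firstZero n n₂ γ) - lam * ((firstZero n n₂ γ - n - 1 : ℤ) : ℝ)) *
          Real.exp (Phi V ω n₁ n₂ (repair ω n₁ n₂ n (d * r) γ)) := by
  obtain ⟨hA, hF, hγ₁, hγ₂⟩ := hγ
  have hDr : (0 : ℤ) ≤ d * r := by positivity
  obtain ⟨h₁, h₁n, h₁z, h₁ne⟩ := lastZero_spec γ (show n₁ ≤ n by omega)
  obtain ⟨h₂n, h₂, h₂z, h₂ne⟩ := firstZero_spec γ (show n < n₂ by omega)
  obtain ⟨ht₁, ht₂⟩ := lastZero_le_and_le_firstZero hA hbad (by omega) (by omega)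
  have hl1 : ∀ x : X d, nm x ≤ r → (l1 x : ℤ) ≤ d * r := fun x hx => by
    exact_mod_cast (l1_le_mul_nm x).trans (Nat.mul_le_mul_left d hx)
  have hT₁ := l1_le_travelTime (D := d * r) h₁z (by rw [hγ₁]; exact hl1 x₁ hx₁)
  have hT₂ := l1_le_travelTime (D := d * r) h₂z (by rw [hγ₂]; exact hl1 x₂ hx₂)
  unfold repair
  set t₁ := lastZero n₁ n γ
  set t₂ := firstZero n n₂ γ
  set T₁ := travelTime n₁ (d * r) t₁
  set T₂ := travelTime n₂ (d * r) t₂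
  have hTb : 0 ≤ T₁ ∧ (t₁ ≠ n₁ → T₁ = 0) ∧ (t₁ = n₁ → T₁ = d * r) ∧
      0 ≤ T₂ ∧ (t₂ ≠ n₂ → T₂ = 0) ∧ (t₂ = n₂ → T₂ = d * r) := by
    simp only [T₁, T₂, travelTime]; split_ifs <;> omega
  have han : (r : ℤ) ≤ n - (t₁ + T₁) := by
    by_cases h : t₁ = n₁ <;> simp only [h, hTb, ne_eq, not_false_eq_true] <;> omega
  have hbn : (r : ℤ) ≤ t₂ - T₂ - 1 - n := by
    by_cases h : t₂ = n₂ <;> simp only [h, hTb, ne_eq, not_false_eq_true] <;> omega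
  refine ⟨surgery_mem_pathSet hd ⟨hA, hF, hγ₁, hγ₂⟩ h₁ (by omega) (by omega) (by omega) h₂
    (by omega) (by omega), ?_⟩
  have hz : ∀ m, t₁ < m → m < t₂ → γ m ≠ 0 := fun m hm hm' =>
    if hmn : m ≤ n then h₁ne m hm hmn else h₂ne m (by omega) hm'
  have hgain := Phi_le_Phi_surgery (V := V) (ω := ω) (n₁ := n₁) (n₂ := n₂) hd hM₀ hM₁ hV0 hV1 hn
    h₁ (by omega : t₁ ≤ t₁ + T₁) han hbn (by omega) h₂ hz
  have hpow : ((2 * d + 1 : ℕ) : ℝ) ^ (t₂ - t₁ - 1).toNat =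
      Real.exp (((t₂ - t₁ - 1 : ℤ) : ℝ) * Real.log (2 * d + 1)) := by
    have hk : (((t₂ - t₁ - 1).toNat : ℕ) : ℝ) = ((t₂ - t₁ - 1 : ℤ) : ℝ) := by
      exact_mod_cast Int.toNat_of_nonneg (by omega : (0 : ℤ) ≤ t₂ - t₁ - 1)
    rw [← hk, Real.exp_nat_mul, Real.exp_log (by positivity)]
    push_cast; ring
  rw [hpow, ← Real.exp_add, ← Real.exp_add, ← Real.exp_add, Real.exp_le_exp]
  push_cast at hgain ⊢
  linear_combination hgain

lemma sum_exp_Phi_bad_le_sum_cuts (hd : 1 ≤ d) (hM₀ : 0 ≤ M₀) (hM₁ : 0 ≤ M₁) (hV0 : V 0 = M₀)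
    (hV1 : ∀ x : X d, x ≠ 0 → |V x| ≤ M₁) (hn : GoodAt d M₀ M₁ lam r ω n) {x₁ x₂ : X d}
    (hx₁ : nm x₁ ≤ r) (hx₂ : nm x₂ ≤ r) (hleft : (d : ℤ) * r + r + 1 ≤ n - n₁)
    (hright : (d : ℤ) * r + r + 1 ≤ n₂ - n) :
    ∑ γ ∈ (paths d n₁ n₂ x₁ x₂).filter (fun γ => r < nm (γ n)), Real.exp (Phi V ω n₁ n₂ γ) ≤
      ∑ q ∈ (Finset.Icc n₁ (n - r - 1) ×ˢ Finset.Icc (n + r + 1) n₂) ×ˢ paths d n₁ n₂ x₁ x₂,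
        Real.exp ((Real.log (2 * d + 1) + M₀ + 2 * M₁ + lam) * travelTime n₁ (d * r) q.1.1 -
            lam * ((n - q.1.1 : ℤ) : ℝ)) *
          Real.exp ((Real.log (2 * d + 1) + M₀ + 2 * M₁ + lam) * travelTime n₂ (d * r) q.1.2 -
            lam * ((q.1.2 - n - 1 : ℤ) : ℝ)) *
          Real.exp (Phi V ω n₁ n₂ q.2) := by
  classical
  have hDr : (0 : ℤ) ≤ d * r := by positivity
  have hbad : ∀ γ ∈ (paths d n₁ n₂ x₁ x₂).filter (fun γ => r < nm (γ n)),
      γ ∈ PathSet d n₁ n₂ x₁ x₂ ∧ r < nm (γ n) := fun γ hγ => by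
    rwa [Finset.mem_filter, mem_paths] at hγ
  have hrepair := fun γ hγ => repair_mem_and_exp_Phi_le (ω := ω) hd hM₀ hM₁ hV0 hV1 hn hx₁ hx₂
    hleft hright (hbad γ hγ).1 (hbad γ hγ).2
  refine sum_le_sum_of_card_fiber_le
    (fun γ => ((lastZero n₁ n γ, firstZero n n₂ γ), repair ω n₁ n₂ n (d * r) γ))
    (fun γ hγ => ?_) _ _ (fun q => (2 * d + 1) ^ (q.1.2 - q.1.1 - 1).toNat)
    (fun q hq => ?_) (fun γ hγ => by exact_mod_cast (hrepair γ hγ).2) (fun q _ => by positivity)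
  · obtain ⟨hγ, hbad⟩ := hbad γ hγ
    have := lastZero_le_and_le_firstZero hγ.1 hbad (by omega) (by omega)
    simp only [Finset.mem_product, Finset.mem_Icc, mem_paths]
    exact ⟨⟨⟨(lastZero_spec γ (by omega)).1, this.1⟩,
      ⟨this.2, (firstZero_spec γ (by omega)).2.1⟩⟩, (hrepair γ ‹_›).1⟩
  · simp only [Finset.mem_product, Finset.mem_Icc] at hq
    refine card_le_of_eqOn_compl_Ioo q.2 _ hq.1.1.1 hq.1.2.2 fun γ hγ => ?_
    obtain ⟨hγbad, rfl⟩ := Finset.mem_filter.1 hγ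
    exact ⟨(hbad γ hγbad).1.1, fun m hm => (surgery_of_out hm).symm⟩

theorem sum_exp_Phi_bad_le (hd : 1 ≤ d) (hM₀ : 0 ≤ M₀) (hM₁ : 0 ≤ M₁) (hlam : 0 < lam)
    (hV0 : V 0 = M₀) (hV1 : ∀ x : X d, x ≠ 0 → |V x| ≤ M₁) (hn : GoodAt d M₀ M₁ lam r ω n)
    {x₁ x₂ : X d} (hx₁ : nm x₁ ≤ r) (hx₂ : nm x₂ ≤ r)
    (hleft : (Real.log (2 * d + 1) + M₀ + 2 * M₁ + lam) * (d * r) + lam * (r + 1) ≤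
      lam * (n - n₁))
    (hright : (Real.log (2 * d + 1) + M₀ + 2 * M₁ + lam) * (d * r) + lam * (r + 1) ≤
      lam * (n₂ - n)) :
    ∑ γ ∈ (paths d n₁ n₂ x₁ x₂).filter (fun γ => r < nm (γ n)), Real.exp (Phi V ω n₁ n₂ γ) ≤
      (1 + 1 / (1 - Real.exp (-lam))) ^ 2 * Real.exp (-2 * lam * r) * Z V ω n₁ n₂ x₁ x₂ := by
  set K := Real.log (2 * d + 1) + M₀ + 2 * M₁ + lam
  set G := 1 + 1 / (1 - Real.exp (-lam))
  have hK : lam * (d * r) ≤ K * (d * r) := by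
    have : 0 ≤ Real.log (2 * d + 1) := Real.log_nonneg (by linarith [(d.cast_nonneg : (0 : ℝ) ≤ d)])
    exact mul_le_mul_of_nonneg_right (by linarith) (by positivity)
  have hint : ∀ {m : ℤ}, K * (d * r) + lam * (r + 1) ≤ lam * m → (d : ℤ) * r + r + 1 ≤ m := by
    intro m hm
    have : ((d * r + r + 1 : ℤ) : ℝ) ≤ m := by
      push_cast; exact le_of_mul_le_mul_left (by linarith) hlam
    exact_mod_cast this
  have hL : ∑ t ∈ Finset.Icc n₁ (n - r - 1),
      Real.exp (K * travelTime n₁ (d * r) t - lam * ((n - t : ℤ) : ℝ)) ≤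
        G * Real.exp (-lam * ((r + 1 : ℤ) : ℝ)) :=
    sum_exp_travelTime_le hlam (fun t _ t' _ h => by simpa using h)
      (fun t ht => by rw [Finset.mem_Icc] at ht; omega) (by push_cast; linarith)
  have hR : ∑ t ∈ Finset.Icc (n + r + 1) n₂,
      Real.exp (K * travelTime n₂ (d * r) t - lam * ((t - n - 1 : ℤ) : ℝ)) ≤
        G * Real.exp (-lam * (r : ℤ)) :=
    sum_exp_travelTime_le hlam (fun t _ t' _ h => by simpa using h)
      (fun t ht => by rw [Finset.mem_Icc] at ht; omega) (by push_cast; linarith)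
  have hexp : Real.exp (-lam * ((r + 1 : ℤ) : ℝ)) * Real.exp (-lam * (r : ℤ)) ≤
      Real.exp (-2 * lam * r) := by
    rw [← Real.exp_add, Real.exp_le_exp]; push_cast; linarith
  have hZ := Z_nonneg (n₁ := n₁) (n₂ := n₂) V ω x₁ x₂
  calc _ ≤ _ := sum_exp_Phi_bad_le_sum_cuts hd hM₀ hM₁ hV0 hV1 hn hx₁ hx₂
        (hint (by push_cast; linarith)) (hint (by push_cast; linarith))
    _ = (∑ t ∈ Finset.Icc n₁ (n - r - 1),
            Real.exp (K * travelTime n₁ (d * r) t - lam * ((n - t : ℤ) : ℝ))) *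
          (∑ t ∈ Finset.Icc (n + r + 1) n₂,
            Real.exp (K * travelTime n₂ (d * r) t - lam * ((t - n - 1 : ℤ) : ℝ))) *
          Z V ω n₁ n₂ x₁ x₂ := by
        rw [Finset.sum_product, Finset.sum_product, Z_eq_sum, Finset.sum_mul_sum, Finset.sum_mul]
        simp only [Finset.sum_mul_sum]
        rfl
    _ ≤ G * Real.exp (-lam * ((r + 1 : ℤ) : ℝ)) * (G * Real.exp (-lam * (r : ℤ))) *
          Z V ω n₁ n₂ x₁ x₂ := by
        gcongr
        exact (Finset.sum_nonneg fun _ _ => (Real.exp_pos _).le).trans hL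
    _ = G ^ 2 * Z V ω n₁ n₂ x₁ x₂ *
          (Real.exp (-lam * ((r + 1 : ℤ) : ℝ)) * Real.exp (-lam * (r : ℤ))) := by ring
    _ ≤ G ^ 2 * Z V ω n₁ n₂ x₁ x₂ * Real.exp (-2 * lam * r) := by gcongr
    _ = _ := by ring

end BadPaths

section Gibbs

variable {d : ℕ}

lemma measurableSet_setOf_apply₂ (m m' : ℤ) (P : X d → X d → Prop) :
    MeasurableSet {α : ℤ → X d | P (α m) (α m')} := by
  have h : Measurable fun α : ℤ → X d => (α m, α m') :=
    (measurable_pi_apply m).prodMk (measurable_pi_apply m')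
  exact h (Set.to_countable {p : X d × X d | P p.1 p.2}).measurableSet

lemma measurableSet_adm_frozen (n₁ n₂ : ℤ) :
    MeasurableSet {γ : ℤ → X d | Adm n₁ n₂ γ ∧ Frozen n₁ n₂ γ} := by
  simp only [Adm, Frozen, Set.ofPred_and, Set.ofPred_forall]
  exact .inter (.iInter fun m => .iInter fun _ => .iInter fun _ =>
      measurableSet_setOf_apply₂ m (m + 1) stepOK)
    (.inter (.iInter fun m => .iInter fun _ => measurableSet_setOf_apply₂ m n₁ Eq)
      (.iInter fun m => .iInter fun _ => measurableSet_setOf_apply₂ m n₂ Eq))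

variable {V : X d → ℝ} {ω : ℤ → Bool} {n₁ n₂ : ℤ} {μ : Measure (ℤ → X d)}

lemma FVGibbs.measure_cylinder_le (hμ : FVGibbs d V ω n₁ n₂ μ) (h12 : n₁ ≤ n₂)
    {γ : ℤ → X d} (hγ : Adm n₁ n₂ γ) :
    μ {α | ∀ m, n₁ ≤ m → m ≤ n₂ → α m = γ m} ≤
      ENNReal.ofReal (Real.exp (Phi V ω n₁ n₂ γ) / Z V ω n₁ n₂ (γ n₁) (γ n₂)) *
        μ {α | α n₁ = γ n₁ ∧ α n₂ = γ n₂} := by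
  by_cases h0 : μ {α | α n₁ = γ n₁ ∧ α n₂ = γ n₂} = 0
  · refine (measure_mono_null (fun α hα => ?_) h0).le.trans zero_le
    exact ⟨hα n₁ le_rfl h12, hα n₂ h12 le_rfl⟩
  · exact (hμ.2.2 γ hγ h0).le

lemma FVGibbs.sum_measure_cylinder_le (hμ : FVGibbs d V ω n₁ n₂ μ) (h12 : n₁ ≤ n₂)
    {x₁ x₂ : X d} (P : (ℤ → X d) → Prop) [DecidablePred P] {c : ℝ} (hc : 0 ≤ c)
    (hP : ∑ γ ∈ (paths d n₁ n₂ x₁ x₂).filter P, Real.exp (Phi V ω n₁ n₂ γ) ≤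
      c * Z V ω n₁ n₂ x₁ x₂) :
    ∑ γ ∈ (paths d n₁ n₂ x₁ x₂).filter P, μ {α | ∀ m, n₁ ≤ m → m ≤ n₂ → α m = γ m} ≤
      ENNReal.ofReal c * μ {α | α n₁ = x₁ ∧ α n₂ = x₂} := by
  calc _ ≤ ∑ γ ∈ (paths d n₁ n₂ x₁ x₂).filter P, ENNReal.ofReal
          (Real.exp (Phi V ω n₁ n₂ γ) / Z V ω n₁ n₂ x₁ x₂) * μ {α | α n₁ = x₁ ∧ α n₂ = x₂} :=
        Finset.sum_le_sum fun γ hγ => by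
          obtain ⟨hA, -, rfl, rfl⟩ := mem_paths.1 (Finset.mem_filter.1 hγ).1
          exact hμ.measure_cylinder_le h12 hA
    _ = ENNReal.ofReal ((∑ γ ∈ (paths d n₁ n₂ x₁ x₂).filter P,
          Real.exp (Phi V ω n₁ n₂ γ)) / Z V ω n₁ n₂ x₁ x₂) * μ {α | α n₁ = x₁ ∧ α n₂ = x₂} := by
        rw [← Finset.sum_mul, Finset.sum_div,
          ENNReal.ofReal_sum_of_nonneg fun γ _ => div_nonneg (Real.exp_pos _).le (Z_nonneg ..)]
    _ ≤ _ := by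
        gcongr
        exact div_le_of_le_mul₀ (Z_nonneg ..) hc hP

lemma sum_measure_ends_le_one [IsProbabilityMeasure μ] (s : Finset (X d × X d)) :
    ∑ p ∈ s, μ {α | α n₁ = p.1 ∧ α n₂ = p.2} ≤ 1 := by
  rw [← measure_biUnion_finset (fun p _ p' _ hne => Set.disjoint_left.2 fun α h h' =>
      hne (Prod.ext (h.1.symm.trans h'.1) (h.2.symm.trans h'.2)))
    fun p _ => measurableSet_setOf_apply₂ n₁ n₂ fun x y => x = p.1 ∧ y = p.2]
  exact prob_le_one

theorem FVGibbs.measure_le_ofReal (hμ : FVGibbs d V ω n₁ n₂ μ) (h12 : n₁ ≤ n₂)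
    {R : Finset (X d)} (hR : μ {γ | γ n₁ ∈ R ∧ γ n₂ ∈ R} = 1)
    (P : (ℤ → X d) → Prop) [DecidablePred P] {c : ℝ} (hc : 0 ≤ c)
    (hP : ∀ x₁ ∈ R, ∀ x₂ ∈ R, ∑ γ ∈ (paths d n₁ n₂ x₁ x₂).filter P,
      Real.exp (Phi V ω n₁ n₂ γ) ≤ c * Z V ω n₁ n₂ x₁ x₂) :
    μ {γ | P γ} ≤ ENNReal.ofReal c := by
  have := hμ.1
  have hG : μ ({γ | Adm n₁ n₂ γ ∧ Frozen n₁ n₂ γ} ∩ {γ | γ n₁ ∈ R ∧ γ n₂ ∈ R})ᶜ = 0 := by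
    rw [Set.compl_inter]
    refine measure_union_null ?_ ?_
    · rw [prob_compl_eq_zero_iff (measurableSet_adm_frozen n₁ n₂)]; exact hμ.2.1
    · rw [prob_compl_eq_zero_iff (measurableSet_setOf_apply₂ n₁ n₂ fun x y => x ∈ R ∧ y ∈ R)]
      exact hR
  have hcover : {γ | P γ} ∩ ({γ | Adm n₁ n₂ γ ∧ Frozen n₁ n₂ γ} ∩ {γ | γ n₁ ∈ R ∧ γ n₂ ∈ R}) ⊆
      ⋃ p ∈ R ×ˢ R, ⋃ γ ∈ (paths d n₁ n₂ p.1 p.2).filter P,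
        {α | ∀ m, n₁ ≤ m → m ≤ n₂ → α m = γ m} := by
    rintro α ⟨hP, ⟨hA, hF⟩, h₁, h₂⟩
    simp only [Set.mem_iUnion, Finset.mem_product, Finset.mem_filter, mem_paths]
    exact ⟨(α n₁, α n₂), ⟨h₁, h₂⟩, α, ⟨⟨hA, hF, rfl, rfl⟩, hP⟩, fun _ _ _ => rfl⟩
  calc μ {γ | P γ}
      = μ ({γ | P γ} ∩ ({γ | Adm n₁ n₂ γ ∧ Frozen n₁ n₂ γ} ∩ {γ | γ n₁ ∈ R ∧ γ n₂ ∈ R})) :=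
        (measure_inter_conull hG).symm
    _ ≤ ∑ p ∈ R ×ˢ R, ∑ γ ∈ (paths d n₁ n₂ p.1 p.2).filter P,
          μ {α | ∀ m, n₁ ≤ m → m ≤ n₂ → α m = γ m} :=
        (measure_mono hcover).trans <| (measure_biUnion_finset_le _ _).trans <|
          Finset.sum_le_sum fun p _ => measure_biUnion_finset_le _ _
    _ ≤ ∑ p ∈ R ×ˢ R, ENNReal.ofReal c * μ {α | α n₁ = p.1 ∧ α n₂ = p.2} :=
        Finset.sum_le_sum fun p hp => by
          rw [Finset.mem_product] at hp
          exact hμ.sum_measure_cylinder_le h12 P hc (hP _ hp.1 _ hp.2)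
    _ ≤ ENNReal.ofReal c * 1 := by
        rw [← Finset.mul_sum]
        gcongr
        exact sum_measure_ends_le_one _
    _ = ENNReal.ofReal c := mul_one _

end Gibbs

theorem statement9_general
    (d : ℕ) (hd : 1 ≤ d) (M₀ M₁ : ℝ) (hM₀ : 0 ≤ M₀) (hM₁ : 0 ≤ M₁)
    (lam : ℝ) (hlam : 0 < lam) :
    ∃ C : ℝ, 0 < C ∧ ∃ N₁ : ℕ → ℕ,
      ∀ (V : X d → ℝ), V 0 = M₀ → (∀ x : X d, x ≠ 0 → |V x| ≤ M₁) →
      ∀ (ω : ℤ → Bool) (n₁ n₂ : ℤ) (μ : Measure (ℤ → X d)),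
        FVGibbs d V ω n₁ n₂ μ →
        ∀ (r : ℕ) (n : ℤ), n₁ ≤ n → n ≤ n₂ →
          μ {γ | nm (γ n₁) ≤ r ∧ nm (γ n₂) ≤ r} = 1 →
          (∀ k : ℕ, r ≤ k →
            (k : ℝ) * (M₁ + lam + Real.log (2 * (d : ℝ) + 1)) <
              ∑ j ∈ Finset.Icc (n + 1) (n + k), xi M₀ M₁ ω j) →
          (∀ k : ℕ, r ≤ k →
            (k : ℝ) * (M₁ + lam + Real.log (2 * (d : ℝ) + 1)) <
              ∑ j ∈ Finset.Icc (n - k + 1) n, xi M₀ M₁ ω j) →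
          (N₁ r : ℤ) < n₂ - n → (N₁ r : ℤ) < n - n₁ →
          μ {γ | r < nm (γ n)} < ENNReal.ofReal (C * Real.exp (-2 * lam * r)) := by
  set G := 1 + 1 / (1 - Real.exp (-lam))
  set K := Real.log (2 * d + 1) + M₀ + 2 * M₁ + lam
  have hG : 0 < G := by
    have : Real.exp (-lam) < 1 := Real.exp_lt_one_iff.2 (by linarith)
    have : 0 < 1 / (1 - Real.exp (-lam)) := by apply div_pos <;> linarith
    linarith
  refine ⟨2 * G ^ 2, by positivity, fun r => ⌈K * (d * r) / lam⌉₊ + r, ?_⟩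
  intro V hV0 hV1 ω n₁ n₂ μ hμ r n hn₁ hn₂ hends hwinR hwinL hNR hNL
  have hmargin : ∀ {m : ℤ}, ((⌈K * (d * r) / lam⌉₊ + r : ℕ) : ℤ) < m →
      K * (d * r) + lam * (r + 1) ≤ lam * (m : ℤ) := by
    intro m hm
    have hm' : (⌈K * (d * r) / lam⌉₊ : ℤ) + r + 1 ≤ m := by omega
    have h₁ : (⌈K * (d * r) / lam⌉₊ : ℝ) + r + 1 ≤ m := by exact_mod_cast hm'
    have h₂ := Nat.le_ceil (K * (d * r) / lam)
    have h₃ : lam * (K * (d * r) / lam) = K * (d * r) := by field_simp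
    nlinarith
  calc μ {γ | r < nm (γ n)} ≤ ENNReal.ofReal (G ^ 2 * Real.exp (-2 * lam * r)) :=
        hμ.measure_le_ofReal (R := ball d r) (by omega) (by simpa only [mem_ball_iff] using hends)
          (fun γ => r < nm (γ n)) (by positivity) fun x₁ hx₁ x₂ hx₂ =>
            sum_exp_Phi_bad_le hd hM₀ hM₁ hlam hV0 hV1 ⟨hwinR, hwinL⟩ (mem_ball_iff.1 hx₁)
              (mem_ball_iff.1 hx₂) (by simpa using hmargin hNL) (by simpa using hmargin hNR)
    _ < ENNReal.ofReal (2 * G ^ 2 * Real.exp (-2 * lam * r)) :=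
        (ENNReal.ofReal_lt_ofReal_iff (by positivity)).2
          (by nlinarith [Real.exp_pos (-2 * lam * r), pow_pos hG 2])

/-- Lemma 4.1 (concentration for finite-volume Gibbs marginals). -/
theorem statement9
    (d : ℕ) (hd : 1 ≤ d) (M₀ M₁ : ℝ) (hM₀ : 0 ≤ M₀) (hM₁ : 0 ≤ M₁)
    (hl0 : 0 < (M₀ - 3 * M₁) / 2 - Real.log (2 * (d : ℝ) + 1))
    (lam : ℝ) (hlam : 0 < lam)
    (hlam' : lam < (M₀ - 3 * M₁) / 2 - Real.log (2 * (d : ℝ) + 1)) :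
    ∃ C : ℝ, 0 < C ∧ ∃ N₁ : ℕ → ℕ,
      ∀ (V : X d → ℝ), V 0 = M₀ → (∀ x : X d, x ≠ 0 → |V x| ≤ M₁) →
      ∀ (ω : ℤ → Bool) (n₁ n₂ : ℤ) (μ : Measure (ℤ → X d)),
        FVGibbs d V ω n₁ n₂ μ →
        ∀ (r : ℕ) (n : ℤ), n₁ ≤ n → n ≤ n₂ →
          μ {γ | nm (γ n₁) ≤ r ∧ nm (γ n₂) ≤ r} = 1 →
          (∀ k : ℕ, r ≤ k →
            (k : ℝ) * (M₁ + lam + Real.log (2 * (d : ℝ) + 1)) <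
              ∑ j ∈ Finset.Icc (n + 1) (n + k), xi M₀ M₁ ω j) →
          (∀ k : ℕ, r ≤ k →
            (k : ℝ) * (M₁ + lam + Real.log (2 * (d : ℝ) + 1)) <
              ∑ j ∈ Finset.Icc (n - k + 1) n, xi M₀ M₁ ω j) →
          (N₁ r : ℤ) < n₂ - n → (N₁ r : ℤ) < n - n₁ →
          μ {γ | r < nm (γ n)} < ENNReal.ofReal (C * Real.exp (-2 * lam * r)) :=
  statement9_general d hd M₀ M₁ hM₀ hM₁ lam hlam

end BKpaper
end

section
/- Fix λ ∈ (0, λ₀) and N ∈ ℕ. Then for P-a.e. ω there exists a strictly increasing doubly infinite sequence of integers (n_i)_{i∈ℤ} with n_i → +∞ as i → +∞ and n_i → −∞ as i → −∞, such that n_{i+1} − n_i > 2N for all i, and for every i ∈ ℤ: ω_{n_i−N+1} = ω_{n_i−N+2} = … = ω_{n_i+N} = 1; for every k ≥ 1, Σ_{j=n_i+N+1}^{n_i+N+k} ξ_j(ω) > k(M₁ + λ + log(2d+1)); and for every k ≥ 1, Σ_{j=n_i−N−k+1}^{n_i−N} ξ_j(ω) > k(M₁ + λ + log(2d+1)). 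-/
open MeasureTheory Filter

namespace BKpaper

/-!
Under `IsBernoulli` the measure `P` is the product of fair coins, so the coordinates are i.i.d.
A window of `2 (N + L)` ones is a good place for a centre `n`: inside it every partial sum of `ξ`
starting at `n ± N` runs at slope `M₀ > c`, banking a surplus `L (M₀ - c)` over the line `k c`,
so the centre is good as soon as the partial sums beyond the window never dip more than
`L (M₀ - c)` below that line. Since `E ξ = (M₀ - M₁) / 2 > c`, a Chernoff bound makes such a dip
exponentially unlikely in `L`. Among `L 2^(2 (N + L))` disjoint windows some window is all ones
except with probability `≤ e^(-L)`, so a block of that many windows fails to produce a good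
centre with a probability that is summable in `L`; Borel–Cantelli along blocks running off to
`+∞` and to `-∞` gives good centres unbounded in both directions, and a sequence with gaps
`> 2N` is extracted from them.
-/

open Finset Function Real ProbabilityTheory Topology
open scoped ENNReal

section DependsOn

variable {ι κ : Type*} {α : ι → Type*}

lemma DependsOn.mem_compl {A : Set (∀ i, α i)} {s : Set ι} (hA : DependsOn (· ∈ A) s) :
    DependsOn (· ∈ Aᶜ) s := fun _ _ h => by simp only [Set.mem_compl_iff, hA h]

lemma dependsOn_mem_biInter {S : Finset κ} {A : κ → Set (∀ i, α i)} {s : κ → Set ι}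
    (hA : ∀ j ∈ S, DependsOn (· ∈ A j) (s j)) :
    DependsOn (· ∈ ⋂ j ∈ S, A j) (⋃ j ∈ S, s j) := fun ω ω' h => by
  simp only [Set.mem_iInter]
  exact propext <| forall₂_congr fun j hj =>
    eq_iff_iff.1 <| hA j hj fun i hi => h i (Set.mem_biUnion hj hi)

lemma preimage_image_restrict_of_dependsOn {s : Finset ι} {A : Set (∀ i, α i)}
    (hA : DependsOn (· ∈ A) s) : s.restrict ⁻¹' (s.restrict '' A) = A := by
  refine Set.Subset.antisymm ?_ (Set.subset_preimage_image _ _)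
  rintro ω ⟨ω', hω', hrestrict⟩
  exact (hA fun i hi => congrFun hrestrict ⟨i, hi⟩).mp hω'

end DependsOn

lemma measurableSet_of_dependsOn {s : Finset ℤ} {A : Set (ℤ → Bool)}
    (hA : DependsOn (· ∈ A) s) : MeasurableSet A := by
  rw [← preimage_image_restrict_of_dependsOn hA]
  exact Finset.measurable_restrict s .of_discrete

noncomputable abbrev fairCoin : Measure Bool := (PMF.uniformOfFintype Bool).toMeasure

lemma integral_fairCoin (g : Bool → ℝ) : ∫ b, g b ∂fairCoin = (g true + g false) / 2 := by
  simp [PMF.integral_eq_sum]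
  ring

def run (s : Finset ℤ) : Set (ℤ → Bool) := {ω | ∀ j ∈ s, ω j = true}

lemma dependsOn_run (s : Finset ℤ) : DependsOn (· ∈ run s) s := fun ω ω' h => by
  simp only [run, Set.mem_ofPred_eq]
  exact propext <| forall₂_congr fun j hj => by rw [h j hj]

lemma dependsOn_sum_xi_le (M₀ M₁ : ℝ) (e : ℕ → ℤ) (k : ℕ) (v : ℝ) :
    DependsOn (· ∈ {ω | ∑ j ∈ range k, xi M₀ M₁ ω (e j) ≤ v}) ((range k).image e) :=
  fun ω ω' h => by
    simp only [Set.mem_ofPred_eq]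
    rw [sum_congr rfl fun j hj => show xi M₀ M₁ ω (e j) = xi M₀ M₁ ω' (e j) by
      unfold xi; rw [h (e j) (mem_coe.2 (mem_image_of_mem e hj))]]

def dip (M₀ M₁ c B : ℝ) (e : ℕ → ℤ) : Set (ℤ → Bool) :=
  ⋃ k : ℕ, {ω | ∑ j ∈ range k, xi M₀ M₁ ω (e j) ≤ k * c - B}

namespace IsBernoulli

variable {P : Measure (ℤ → Bool)}

theorem map_restrict (hP : IsBernoulli P) (s : Finset ℤ) :
    P.map s.restrict = Measure.pi fun _ => fairCoin := by
  refine Measure.ext_of_singleton fun a => ?_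
  obtain ⟨ω₀, rfl⟩ : ∃ ω₀ : ℤ → Bool, s.restrict ω₀ = a :=
    ⟨fun i => if h : i ∈ s then a ⟨i, h⟩ else false, by ext; simp⟩
  have hcyl : s.restrict ⁻¹' ({s.restrict ω₀} : Set (s → Bool)) =
      {ω | ∀ i ∈ s, ω i = ω₀ i} := by
    ext ω; simp [funext_iff]
  rw [Measure.map_apply (Finset.measurable_restrict s) (measurableSet_singleton _), hcyl, hP.2,
    Measure.pi_singleton]
  simp

theorem eq_infinitePi (hP : IsBernoulli P) : P = Measure.infinitePi fun _ => fairCoin :=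
  IsProjectiveLimit.unique hP.map_restrict (Measure.isProjectiveLimit_infinitePi _)

theorem iIndepFun_eval (hP : IsBernoulli P) : iIndepFun (fun i (ω : ℤ → Bool) => ω i) P := by
  rw [hP.eq_infinitePi]
  exact iIndepFun_infinitePi (X := fun _ => id) fun _ => measurable_id

theorem map_eval (hP : IsBernoulli P) (i : ℤ) : P.map (fun ω => ω i) = fairCoin := by
  rw [hP.eq_infinitePi, Measure.infinitePi_map_eval]

theorem measure_inter_of_dependsOn (hP : IsBernoulli P) {s t : Finset ℤ} (hst : Disjoint s t)
    {A B : Set (ℤ → Bool)} (hA : DependsOn (· ∈ A) s) (hB : DependsOn (· ∈ B) t) :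
    P (A ∩ B) = P A * P B := by
  rw [← preimage_image_restrict_of_dependsOn hA, ← preimage_image_restrict_of_dependsOn hB]
  exact (hP.iIndepFun_eval.indepFun_finset s t hst fun i => measurable_pi_apply i
    ).measure_inter_preimage_eq_mul _ _ .of_discrete .of_discrete

theorem measure_run (hP : IsBernoulli P) (s : Finset ℤ) : P (run s) = 2⁻¹ ^ s.card := by
  rw [run, hP.2 s fun _ => true, one_div]

theorem measure_iInter_compl_run (hP : IsBernoulli P) {w : ℕ → Finset ℤ}
    (hw : Pairwise (Disjoint on w)) {W : ℕ} (hW : ∀ j, (w j).card = W) (K : ℕ) :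
    P (⋂ j ∈ range K, (run (w j))ᶜ) = (1 - 2⁻¹ ^ W) ^ K := by
  have := hP.1
  induction K with
  | zero => simp
  | succ K ih =>
    have hdisj : Disjoint ((range K).biUnion w) (w K) :=
      (disjoint_biUnion_left _ _ _).2 fun j hj => hw (mem_range.1 hj).ne
    have hdep : DependsOn (· ∈ ⋂ j ∈ range K, (run (w j))ᶜ) ↑((range K).biUnion w) := by
      rw [coe_biUnion]
      exact dependsOn_mem_biInter fun j _ => DependsOn.mem_compl (dependsOn_run (w j))
    rw [range_add_one, set_biInter_insert, Set.inter_comm,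
      hP.measure_inter_of_dependsOn hdisj hdep
        (DependsOn.mem_compl (dependsOn_run (w K))), ih,
      prob_compl_eq_one_sub (measurableSet_of_dependsOn (dependsOn_run (w K))),
      hP.measure_run, hW, pow_succ]

theorem integrable_comp_eval (hP : IsBernoulli P) (g : Bool → ℝ) (i : ℤ) :
    Integrable (fun ω => g (ω i)) P := by
  have : Integrable g (P.map fun ω => ω i) := by
    rw [hP.map_eval]
    exact Integrable.of_finite
  exact this.comp_measurable (measurable_pi_apply i)

theorem mgf_xi (hP : IsBernoulli P) (M₀ M₁ t : ℝ) (i : ℤ) :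
    mgf (fun ω => xi M₀ M₁ ω i) P t = (exp (t * M₀) + exp (-(t * M₁))) / 2 := by
  calc ∫ ω, exp (t * xi M₀ M₁ ω i) ∂P
      = ∫ b, exp (t * if b then M₀ else -M₁) ∂(P.map fun ω => ω i) := by
        rw [integral_map (measurable_pi_apply i).aemeasurable
          Measurable.of_discrete.aestronglyMeasurable]
        rfl
    _ = _ := by rw [hP.map_eval, integral_fairCoin]; simp

theorem measureReal_sum_xi_le (hP : IsBernoulli P) (M₀ M₁ : ℝ) {e : ℕ → ℤ}
    (he : Injective e) {t : ℝ} (ht : 0 ≤ t) (k : ℕ) (v : ℝ) :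
    P.real {ω | ∑ j ∈ range k, xi M₀ M₁ ω (e j) ≤ v} ≤
      exp (t * v) * ((exp (-(t * M₀)) + exp (t * M₁)) / 2) ^ k := by
  have := hP.1
  let X : ℕ → (ℤ → Bool) → ℝ := fun j ω => xi M₀ M₁ ω (e j)
  have hX : ∀ j, Measurable (X j) := fun j =>
    (Measurable.of_discrete (f := fun b : Bool => if b then M₀ else -M₁)).comp
      (measurable_pi_apply (e j))
  have hindep : iIndepFun X P :=
    (hP.iIndepFun_eval.precomp he).comp (fun _ b => if b then M₀ else -M₁)
      fun _ => .of_discrete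
  have hint : Integrable (fun ω => exp (-t * (∑ j ∈ range k, X j) ω)) P :=
    hindep.integrable_exp_mul_sum hX fun j _ =>
      hP.integrable_comp_eval (fun b => exp (-t * if b then M₀ else -M₁)) (e j)
  calc P.real {ω | ∑ j ∈ range k, xi M₀ M₁ ω (e j) ≤ v}
      = P.real {ω | (∑ j ∈ range k, X j) ω ≤ v} := by simp only [Finset.sum_apply, X]
    _ ≤ exp (-(-t) * v) * mgf (∑ j ∈ range k, X j) P (-t) :=
        measure_le_le_exp_mul_mgf v (by linarith) hint
    _ = _ := by
        rw [hindep.mgf_sum hX, prod_congr rfl fun j _ => hP.mgf_xi M₀ M₁ (-t) (e j),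
          prod_const, card_range]
        simp only [neg_neg, neg_mul]

theorem measure_run_inter_dip_le (hP : IsBernoulli P) {M₀ M₁ c t : ℝ} (ht : 0 ≤ t)
    (hθ : exp (t * c) * ((exp (-(t * M₀)) + exp (t * M₁)) / 2) < 1) (B : ℝ)
    {s : Finset ℤ} {e : ℕ → ℤ} (he : Injective e) (hes : ∀ j, e j ∉ s) :
    P (run s ∩ dip M₀ M₁ c B e) ≤ 2⁻¹ ^ s.card * ENNReal.ofReal
      (exp (-(t * B)) / (1 - exp (t * c) * ((exp (-(t * M₀)) + exp (t * M₁)) / 2))) := by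
  have := hP.1
  set θ := exp (t * c) * ((exp (-(t * M₀)) + exp (t * M₁)) / 2)
  have hθ0 : 0 ≤ θ := by positivity
  have hsum_le : ∀ k : ℕ, P {ω | ∑ j ∈ range k, xi M₀ M₁ ω (e j) ≤ k * c - B} ≤
      ENNReal.ofReal (exp (-(t * B)) * θ ^ k) := fun k => by
    rw [← ofReal_measureReal]
    refine ENNReal.ofReal_le_ofReal <| (hP.measureReal_sum_xi_le M₀ M₁ he ht k _).trans_eq ?_
    rw [mul_pow, ← exp_nat_mul, ← mul_assoc, ← exp_add]
    ring_nf
  have hdisj : ∀ k, Disjoint s ((range k).image e) := fun k =>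
    disjoint_left.2 fun j hj hj' => by
      obtain ⟨i, -, rfl⟩ := mem_image.1 hj'
      exact hes i hj
  calc P (run s ∩ dip M₀ M₁ c B e)
      ≤ ∑' k : ℕ, P (run s ∩ {ω | ∑ j ∈ range k, xi M₀ M₁ ω (e j) ≤ k * c - B}) := by
        rw [dip, Set.inter_iUnion]
        exact measure_iUnion_le _
    _ ≤ ∑' k : ℕ, 2⁻¹ ^ s.card * ENNReal.ofReal (exp (-(t * B)) * θ ^ k) := by
        refine ENNReal.tsum_le_tsum fun k => ?_
        rw [hP.measure_inter_of_dependsOn (hdisj k) (dependsOn_run s)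
          (dependsOn_sum_xi_le M₀ M₁ e k _), hP.measure_run]
        gcongr
        exact hsum_le k
    _ = 2⁻¹ ^ s.card * ENNReal.ofReal (exp (-(t * B)) / (1 - θ)) := by
        rw [ENNReal.tsum_mul_left, ← ENNReal.ofReal_tsum_of_nonneg (fun k => by positivity)
          ((summable_geometric_of_lt_one hθ0 hθ).mul_left _), tsum_mul_left,
          tsum_geometric_of_lt_one hθ0 hθ, div_eq_mul_inv]

end IsBernoulli

lemma exists_pos_exp_mul_add_exp_mul_lt_two {a b : ℝ} (h : a + b < 0) :
    ∃ t, 0 < t ∧ exp (t * a) + exp (t * b) < 2 := by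
  have hf : HasDerivAt (fun t => exp (t * a) + exp (t * b)) (a + b) 0 := by
    have := ((hasDerivAt_mul_const (x := (0 : ℝ)) a).exp).add
      (hasDerivAt_mul_const (x := (0 : ℝ)) b).exp
    simp only [zero_mul, exp_zero, one_mul] at this
    exact this
  have hslope := hf.hasDerivWithinAt.limsup_slope_le (s := Set.Ioi 0) h
  rw [show Set.Ioi (0:ℝ) \ {0} = Set.Ioi 0 from Set.sdiff_singleton_eq_self Set.self_notMem_Ioi]
    at hslope
  obtain ⟨t, hneg, ht⟩ := (hslope.and self_mem_nhdsWithin).exists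
  refine ⟨t, ht, ?_⟩
  rw [slope_def_field, sub_zero, div_neg_iff] at hneg
  have := (hneg.resolve_left fun h' => (lt_asymm ht h'.2).elim).1
  norm_num at this
  linarith

lemma one_sub_inv_two_pow_pow_le (W L : ℕ) :
    (1 - 2⁻¹ ^ W : ℝ≥0∞) ^ (L * 2 ^ W) ≤ ENNReal.ofReal (exp (-L)) := by
  have hq : (2⁻¹ : ℝ≥0∞) ^ W = ENNReal.ofReal (2⁻¹ ^ W) := by
    rw [ENNReal.ofReal_pow (by norm_num), ENNReal.ofReal_inv_of_pos two_pos, ENNReal.ofReal_ofNat]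
  have hq1 : (2⁻¹ : ℝ) ^ W ≤ 1 := pow_le_one₀ (by norm_num) (by norm_num)
  rw [hq, ← ENNReal.ofReal_one, ← ENNReal.ofReal_sub _ (by positivity),
    ← ENNReal.ofReal_pow (sub_nonneg.2 hq1)]
  refine ENNReal.ofReal_le_ofReal ?_
  calc (1 - 2⁻¹ ^ W : ℝ) ^ (L * 2 ^ W) ≤ exp (-2⁻¹ ^ W) ^ (L * 2 ^ W) :=
        pow_le_pow_left₀ (sub_nonneg.2 hq1) (one_sub_le_exp_neg _) _
    _ = exp (-L) := by
        rw [← exp_nat_mul]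
        congr 1
        push_cast
        rw [inv_pow]
        field_simp

lemma biInter_compl_sdiff_subset {α κ : Type*} (S : Finset κ) (A B : κ → Set α) :
    ⋂ j ∈ S, (A j \ B j)ᶜ ⊆ (⋂ j ∈ S, (A j)ᶜ) ∪ ⋃ j ∈ S, A j ∩ B j := by
  intro x hx
  simp only [Set.mem_iInter, Set.mem_compl_iff, Set.mem_sdiff, not_and, not_not] at hx
  by_cases h : ∃ j ∈ S, x ∈ A j
  · obtain ⟨j, hj, hA⟩ := h
    exact Or.inr (Set.mem_biUnion hj ⟨hA, hx j hj hA⟩)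
  · push Not at h
    exact Or.inl (Set.mem_iInter₂.2 h)

lemma pairwise_disjoint_Ioc_add_mul (o : ℤ) (W : ℕ) :
    Pairwise (Disjoint on fun j : ℕ => Ioc (o + j * W) (o + j * W + W)) := by
  intro i j hij
  simp only [onFun, disjoint_left, mem_Ioc]
  intro x hx hx'
  rcases hij.lt_or_gt with h | h
  · have : ((i : ℤ) + 1) * W ≤ j * W := by gcongr; exact_mod_cast h
    linarith
  · have : ((j : ℤ) + 1) * W ≤ i * W := by gcongr; exact_mod_cast h
    linarith

def windowWidth (N L : ℕ) : ℕ := 2 * (N + L)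

def windowCount (N L : ℕ) : ℕ := L * 2 ^ windowWidth N L

def dipAround (M₀ M₁ c : ℝ) (N L : ℕ) (a : ℤ) : Set (ℤ → Bool) :=
  dip M₀ M₁ c (L * (M₀ - c)) (fun j => a + windowWidth N L + 1 + j) ∪
    dip M₀ M₁ c (L * (M₀ - c)) (fun j => a - j)

def goodWindow (M₀ M₁ c : ℝ) (N L : ℕ) (a : ℤ) : Set (ℤ → Bool) :=
  run (Ioc a (a + windowWidth N L)) \ dipAround M₀ M₁ c N L a

def badBlock (M₀ M₁ c : ℝ) (N L : ℕ) (o : ℤ) : Set (ℤ → Bool) :=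
  ⋂ j ∈ range (windowCount N L), (goodWindow M₀ M₁ c N L (o + j * windowWidth N L))ᶜ

lemma sum_Icc_eq_sum_range_add (f : ℤ → ℝ) (m : ℤ) (k : ℕ) :
    ∑ j ∈ Icc (m + 1) (m + k), f j = ∑ j ∈ range k, f (m + 1 + j) := by
  refine sum_nbij' (fun x => (x - m - 1).toNat) (fun j : ℕ => m + 1 + j) ?_ ?_ ?_ ?_ ?_ <;>
    intro x hx <;> simp only [mem_Icc, mem_range] at hx ⊢ <;>
    first | omega | (congr 1; omega)

lemma sum_Icc_eq_sum_range_sub (f : ℤ → ℝ) (m : ℤ) (k : ℕ) :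
    ∑ j ∈ Icc (m - k + 1) m, f j = ∑ j ∈ range k, f (m - j) := by
  refine sum_nbij' (fun x => (m - x).toNat) (fun j : ℕ => m - j) ?_ ?_ ?_ ?_ ?_ <;>
    intro x hx <;> simp only [mem_Icc, mem_range] at hx ⊢ <;>
    first | omega | (congr 1; omega)

lemma lt_sum_range_of_prefix {x : ℕ → ℝ} {a c : ℝ} (hc : c < a) {L : ℕ}
    (hpre : ∀ j < L, x j = a)
    (htail : ∀ k : ℕ, k * c - L * (a - c) < ∑ j ∈ range k, x (L + j))
    {k : ℕ} (hk : 1 ≤ k) : k * c < ∑ j ∈ range k, x j := by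
  rcases le_or_gt k L with hkL | hLk
  · rw [sum_congr rfl fun j hj => hpre j ((mem_range.1 hj).trans_le hkL), sum_const, card_range,
      nsmul_eq_mul]
    exact mul_lt_mul_of_pos_left hc (by exact_mod_cast hk)
  · obtain ⟨k', rfl⟩ := Nat.exists_eq_add_of_le hLk.le
    rw [sum_range_add, sum_congr rfl fun j hj => hpre j (mem_range.1 hj), sum_const, card_range,
      nsmul_eq_mul]
    have := htail k'
    push_cast
    linarith

def GoodCenter (M₀ M₁ c : ℝ) (N : ℕ) (ω : ℤ → Bool) (n : ℤ) : Prop :=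
  (∀ j : ℤ, n - N + 1 ≤ j → j ≤ n + N → ω j = true) ∧
  (∀ k : ℕ, 1 ≤ k → (k : ℝ) * c < ∑ j ∈ Icc (n + N + 1) (n + N + k), xi M₀ M₁ ω j) ∧
  (∀ k : ℕ, 1 ≤ k → (k : ℝ) * c < ∑ j ∈ Icc (n - N - k + 1) (n - N), xi M₀ M₁ ω j)

lemma goodCenter_of_mem_goodWindow {M₀ M₁ c : ℝ} (hc : c < M₀) {N L : ℕ} {a : ℤ}
    {ω : ℤ → Bool} (hω : ω ∈ goodWindow M₀ M₁ c N L a) :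
    GoodCenter M₀ M₁ c N ω (a + N + L) := by
  simp only [goodWindow, dipAround, dip, run, windowWidth, Set.mem_sdiff, Set.mem_union,
    Set.mem_iUnion, Set.mem_ofPred_eq, not_or, not_exists, not_le, mem_Ioc, Nat.cast_mul,
    Nat.cast_add, Nat.cast_ofNat] at hω
  obtain ⟨hrun, hfwd, hbwd⟩ := hω
  have hones : ∀ j : ℤ, a < j → j ≤ a + 2 * (N + L) → xi M₀ M₁ ω j = M₀ := fun j h1 h2 => by
    simp [xi, hrun j ⟨h1, h2⟩]
  refine ⟨fun j h1 h2 => hrun j ⟨by omega, by omega⟩, fun k hk => ?_, fun k hk => ?_⟩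
  · rw [sum_Icc_eq_sum_range_add]
    refine lt_sum_range_of_prefix hc (L := L) (fun j hj => hones _ (by omega) (by omega))
      (fun k' => ?_) hk
    refine (hfwd k').trans_eq (sum_congr rfl fun j _ => ?_)
    congr 1
    push_cast
    ring
  · rw [sum_Icc_eq_sum_range_sub]
    refine lt_sum_range_of_prefix hc (L := L) (fun j hj => hones _ (by omega) (by omega))
      (fun k' => ?_) hk
    refine (hbwd k').trans_eq (sum_congr rfl fun j _ => ?_)
    congr 1
    push_cast
    ring

lemma exists_goodCenter_of_notMem_badBlock {M₀ M₁ c : ℝ} (hc : c < M₀) {N L : ℕ} {o : ℤ}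
    {ω : ℤ → Bool} (h : ω ∉ badBlock M₀ M₁ c N L o) :
    ∃ n, o ≤ n ∧ n ≤ o + windowCount N L * windowWidth N L ∧ GoodCenter M₀ M₁ c N ω n := by
  simp only [badBlock, Set.mem_iInter, Set.mem_compl_iff, not_forall, not_not, mem_range] at h
  obtain ⟨j, hj, hgood⟩ := h
  have hW : (windowWidth N L : ℤ) = 2 * (N + L) := by simp [windowWidth]
  have hjW : ((j : ℤ) + 1) * windowWidth N L ≤ windowCount N L * windowWidth N L := by
    gcongr
    exact_mod_cast hj
  have : 0 ≤ (j : ℤ) * windowWidth N L := by positivity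
  exact ⟨_, by omega, by linarith, goodCenter_of_mem_goodWindow hc hgood⟩

namespace IsBernoulli

variable {P : Measure (ℤ → Bool)}

theorem measure_run_inter_dipAround_le (hP : IsBernoulli P) {M₀ M₁ c t : ℝ} (ht : 0 ≤ t)
    (hθ : exp (t * c) * ((exp (-(t * M₀)) + exp (t * M₁)) / 2) < 1) (N L : ℕ) (a : ℤ) :
    P (run (Ioc a (a + windowWidth N L)) ∩ dipAround M₀ M₁ c N L a) ≤
      2 * (2⁻¹ ^ windowWidth N L * ENNReal.ofReal (exp (-(t * (L * (M₀ - c)))) /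
        (1 - exp (t * c) * ((exp (-(t * M₀)) + exp (t * M₁)) / 2)))) := by
  rw [dipAround, Set.inter_union_distrib_left, two_mul]
  refine (measure_union_le _ _).trans (add_le_add ?_ ?_) <;>
    refine (hP.measure_run_inter_dip_le ht hθ _ (fun i i' h => by simpa using h)
      fun i hi => ?_).trans_eq (by simp) <;>
    simp only [mem_Ioc] at hi <;> omega

theorem measure_badBlock_le (hP : IsBernoulli P) {M₀ M₁ c t : ℝ} (ht : 0 ≤ t)
    (hθ : exp (t * c) * ((exp (-(t * M₀)) + exp (t * M₁)) / 2) < 1) (N L : ℕ) (o : ℤ) :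
    P (badBlock M₀ M₁ c N L o) ≤ ENNReal.ofReal (exp (-L) + 2 * L *
      (exp (-(t * (L * (M₀ - c)))) /
        (1 - exp (t * c) * ((exp (-(t * M₀)) + exp (t * M₁)) / 2)))) := by
  set W := windowWidth N L
  set K := windowCount N L
  set x := exp (-(t * (L * (M₀ - c)))) /
    (1 - exp (t * c) * ((exp (-(t * M₀)) + exp (t * M₁)) / 2))
  have hx : 0 ≤ x := div_nonneg (exp_nonneg _) (sub_nonneg.2 hθ.le)
  have hcount : (K : ℝ≥0∞) * 2⁻¹ ^ W = L := by
    rw [show K = L * 2 ^ W from rfl, Nat.cast_mul, Nat.cast_pow, Nat.cast_ofNat, mul_assoc,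
      ← mul_pow, ENNReal.mul_inv_cancel two_ne_zero ENNReal.ofNat_ne_top, one_pow, mul_one]
  calc P (badBlock M₀ M₁ c N L o)
      ≤ P (⋂ j ∈ range K, (run (Ioc (o + j * W) (o + j * W + W)))ᶜ) + ∑ j ∈ range K,
          P (run (Ioc (o + j * W) (o + j * W + W)) ∩ dipAround M₀ M₁ c N L (o + j * W)) :=
        (measure_mono (biInter_compl_sdiff_subset _ _ _)).trans <|
          (measure_union_le _ _).trans <| add_le_add le_rfl (measure_biUnion_finset_le _ _)
    _ ≤ ENNReal.ofReal (exp (-L)) + ∑ j ∈ range K, 2 * (2⁻¹ ^ W * ENNReal.ofReal x) := by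
        rw [hP.measure_iInter_compl_run (pairwise_disjoint_Ioc_add_mul o W) (W := W)
          fun j => by simp]
        exact add_le_add (one_sub_inv_two_pow_pow_le W L)
          (sum_le_sum fun j _ => hP.measure_run_inter_dipAround_le ht hθ N L _)
    _ = ENNReal.ofReal (exp (-L) + 2 * L * x) := by
        rw [sum_const, card_range, nsmul_eq_mul, show (K : ℝ≥0∞) * (2 * (2⁻¹ ^ W *
          ENNReal.ofReal x)) = 2 * (K * 2⁻¹ ^ W) * ENNReal.ofReal x by ring, hcount,
          ENNReal.ofReal_add (exp_nonneg _) (by positivity), ENNReal.ofReal_mul (by positivity),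
          ENNReal.ofReal_mul (by positivity), ENNReal.ofReal_natCast, ENNReal.ofReal_ofNat]

theorem tsum_measure_badBlock_ne_top (hP : IsBernoulli P) {M₀ M₁ c t : ℝ} (hc : c < M₀)
    (ht : 0 < t) (hθ : exp (t * c) * ((exp (-(t * M₀)) + exp (t * M₁)) / 2) < 1) (N : ℕ)
    (o : ℕ → ℤ) : ∑' L, P (badBlock M₀ M₁ c N L (o L)) ≠ ∞ := by
  set θ := exp (t * c) * ((exp (-(t * M₀)) + exp (t * M₁)) / 2)
  set ρ := exp (-(t * (M₀ - c)))
  have hρ : ‖ρ‖ < 1 := by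
    rw [norm_of_nonneg (exp_nonneg _), exp_lt_one_iff, neg_lt_zero]
    exact mul_pos ht (sub_pos.2 hc)
  have hbound_nonneg :
      ∀ L : ℕ, 0 ≤ exp (-L) + 2 * L * (exp (-(t * (L * (M₀ - c)))) / (1 - θ)) :=
    fun L => add_nonneg (exp_nonneg _)
      (mul_nonneg (by positivity) (div_nonneg (exp_nonneg _) (sub_nonneg.2 hθ.le)))
  have hsummable : Summable fun L : ℕ =>
      exp (-L) + 2 * L * (exp (-(t * (L * (M₀ - c)))) / (1 - θ)) := by
    refine Real.summable_exp_neg_nat.add <|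
      ((summable_pow_mul_geometric_of_norm_lt_one 1 hρ).mul_left (2 / (1 - θ))).congr fun L => ?_
    rw [show exp (-(t * (L * (M₀ - c)))) = ρ ^ L by rw [← exp_nat_mul]; ring_nf]
    ring
  refine ne_top_of_le_ne_top ?_
    (ENNReal.tsum_le_tsum fun L => hP.measure_badBlock_le ht.le hθ N L (o L))
  rw [← ENNReal.ofReal_tsum_of_nonneg hbound_nonneg hsummable]
  exact ENNReal.ofReal_ne_top

theorem ae_goodCenter_unbounded (hP : IsBernoulli P) {M₀ M₁ c : ℝ} (hc : c < M₀)
    (hmean : c < (M₀ - M₁) / 2) (N : ℕ) :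
    ∀ᵐ ω ∂P, (∀ m, ∃ n, m ≤ n ∧ GoodCenter M₀ M₁ c N ω n) ∧
      (∀ m, ∃ n, n ≤ m ∧ GoodCenter M₀ M₁ c N ω n) := by
  obtain ⟨t, ht, hexp⟩ :=
    exists_pos_exp_mul_add_exp_mul_lt_two (a := c - M₀) (b := c + M₁) (by linarith)
  have hθ : exp (t * c) * ((exp (-(t * M₀)) + exp (t * M₁)) / 2) < 1 := by
    rw [mul_sub, mul_add, sub_eq_add_neg, exp_add, exp_add] at hexp
    linarith
  filter_upwards [ae_eventually_notMem (hP.tsum_measure_badBlock_ne_top hc ht hθ N fun L => L),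
    ae_eventually_notMem (hP.tsum_measure_badBlock_ne_top hc ht hθ N
      fun L => -L - windowCount N L * windowWidth N L)] with ω hright hleft
  refine ⟨fun m => ?_, fun m => ?_⟩
  · obtain ⟨L, hL, hmL⟩ := (hright.and (eventually_ge_atTop m.toNat)).exists
    obtain ⟨n, hn, -, hgood⟩ := exists_goodCenter_of_notMem_badBlock hc hL
    exact ⟨n, by omega, hgood⟩
  · obtain ⟨L, hL, hmL⟩ := (hleft.and (eventually_ge_atTop (-m).toNat)).exists
    obtain ⟨n, -, hn, hgood⟩ := exists_goodCenter_of_notMem_badBlock hc hL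
    exact ⟨n, by omega, hgood⟩

end IsBernoulli

lemma tendsto_atTop_atTop_and_atBot_atBot_of_strictMono {n : ℤ → ℤ} (hn : StrictMono n) :
    Tendsto n atTop atTop ∧ Tendsto n atBot atBot := by
  have hgrowth : ∀ i j, i ≤ j → n i + (j - i) ≤ n j := by
    intro i j hij
    induction j, hij using Int.leInduction with
    | base => simp
    | succ j _ ih => linarith [hn (lt_add_one j)]
  refine ⟨tendsto_atTop_atTop.2 fun b => ⟨max 0 (b - n 0), fun i hi => ?_⟩,
    tendsto_atBot_atBot.2 fun b => ⟨min 0 (b - n 0), fun i hi => ?_⟩⟩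
  · linarith [hgrowth 0 i (le_of_max_le_left hi), le_of_max_le_right hi]
  · linarith [hgrowth i 0 (le_min_iff.1 hi).1, (le_min_iff.1 hi).2]

lemma exists_strictMono_of_unbounded {Q : ℤ → Prop} {g : ℤ} (hg : 0 ≤ g)
    (hup : ∀ m, ∃ n, m ≤ n ∧ Q n) (hdown : ∀ m, ∃ n, n ≤ m ∧ Q n) :
    ∃ n : ℤ → ℤ, StrictMono n ∧ Tendsto n atTop atTop ∧ Tendsto n atBot atBot ∧
      ∀ i, g < n (i + 1) - n i ∧ Q (n i) := by
  choose up hup_ge hup_Q using hup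
  choose down hdown_le hdown_Q using hdown
  let u : ℕ → ℤ := fun k => Nat.rec (up 0) (fun _ x => up (x + g + 1)) k
  let v : ℕ → ℤ := fun k => Nat.rec (up 0) (fun _ x => down (x - g - 1)) k
  have hu : ∀ k, u k + g < u (k + 1) := fun k => by
    have := hup_ge (u k + g + 1)
    simp only [u] at this ⊢
    omega
  have hv : ∀ k, v (k + 1) + g < v k := fun k => by
    have := hdown_le (v k - g - 1)
    simp only [v] at this ⊢
    omega
  let n : ℤ → ℤ := fun i => if 0 ≤ i then u i.toNat else v (-i).toNat
  have hstep : ∀ i, n i + g < n (i + 1) := by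
    intro i
    rcases lt_trichotomy i (-1) with h | rfl | h
    · have e : (-i).toNat = (-(i + 1)).toNat + 1 := by omega
      simp only [n, if_neg (show ¬ 0 ≤ i by omega), if_neg (show ¬ 0 ≤ i + 1 by omega), e]
      exact hv _
    · exact hv 0
    · have e : (i + 1).toNat = i.toNat + 1 := by omega
      simp only [n, if_pos (show 0 ≤ i by omega), if_pos (show 0 ≤ i + 1 by omega), e]
      exact hu _
  have hmono : StrictMono n := strictMono_int_of_lt_succ fun i => by linarith [hstep i]
  refine ⟨n, hmono, (tendsto_atTop_atTop_and_atBot_atBot_of_strictMono hmono).1,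
    (tendsto_atTop_atTop_and_atBot_atBot_of_strictMono hmono).2,
    fun i => ⟨by linarith [hstep i], ?_⟩⟩
  by_cases h : 0 ≤ i
  · simp only [n, if_pos h]
    cases i.toNat <;> exact hup_Q _
  · simp only [n, if_neg h]
    cases (-i).toNat
    · exact hup_Q _
    · exact hdown_Q _

theorem statement12_general
    (d : ℕ) (M₀ M₁ : ℝ) (hM₁ : 0 ≤ M₁)
    (P : Measure (ℤ → Bool)) (hP : IsBernoulli P)
    (lam : ℝ) (hlam : 0 < lam)
    (hlam' : lam < (M₀ - 3 * M₁) / 2 - Real.log (2 * (d : ℝ) + 1))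
    (N : ℕ) :
    ∀ᵐ ω ∂P, ∃ n : ℤ → ℤ, StrictMono n ∧
      Filter.Tendsto n Filter.atTop Filter.atTop ∧
      Filter.Tendsto n Filter.atBot Filter.atBot ∧
      ∀ i : ℤ,
        (2 * N : ℤ) < n (i + 1) - n i ∧
        (∀ j : ℤ, n i - N + 1 ≤ j → j ≤ n i + N → ω j = true) ∧
        (∀ k : ℕ, 1 ≤ k →
          (k : ℝ) * (M₁ + lam + Real.log (2 * (d : ℝ) + 1)) <
            ∑ j ∈ Finset.Icc (n i + N + 1) (n i + N + k), xi M₀ M₁ ω j) ∧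
        (∀ k : ℕ, 1 ≤ k →
          (k : ℝ) * (M₁ + lam + Real.log (2 * (d : ℝ) + 1)) <
            ∑ j ∈ Finset.Icc (n i - N - k + 1) (n i - N), xi M₀ M₁ ω j) := by
  have hlog : 0 ≤ Real.log (2 * (d : ℝ) + 1) :=
    Real.log_nonneg (by linarith [d.cast_nonneg (α := ℝ)])
  filter_upwards [hP.ae_goodCenter_unbounded (M₀ := M₀) (M₁ := M₁)
    (c := M₁ + lam + Real.log (2 * (d : ℝ) + 1)) (by linarith) (by linarith) N]
    with ω ⟨hup, hdown⟩
  obtain ⟨n, hmono, htop, hbot, hn⟩ :=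
    exists_strictMono_of_unbounded (g := 2 * N) (by positivity) hup hdown
  exact ⟨n, hmono, htop, hbot, fun i => ⟨(hn i).1, (hn i).2⟩⟩

/-- Lemma 4.4 (existence of a doubly infinite sequence of
coupling times). -/
theorem statement12
    (d : ℕ) (hd : 1 ≤ d) (M₀ M₁ : ℝ) (hM₀ : 0 ≤ M₀) (hM₁ : 0 ≤ M₁)
    (hl0 : 0 < (M₀ - 3 * M₁) / 2 - Real.log (2 * (d : ℝ) + 1))
    (P : Measure (ℤ → Bool)) (hP : IsBernoulli P)
    (lam : ℝ) (hlam : 0 < lam)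
    (hlam' : lam < (M₀ - 3 * M₁) / 2 - Real.log (2 * (d : ℝ) + 1))
    (N : ℕ) :
    ∀ᵐ ω ∂P, ∃ n : ℤ → ℤ, StrictMono n ∧
      Filter.Tendsto n Filter.atTop Filter.atTop ∧
      Filter.Tendsto n Filter.atBot Filter.atBot ∧
      ∀ i : ℤ,
        (2 * N : ℤ) < n (i + 1) - n i ∧
        (∀ j : ℤ, n i - N + 1 ≤ j → j ≤ n i + N → ω j = true) ∧
        (∀ k : ℕ, 1 ≤ k →
          (k : ℝ) * (M₁ + lam + Real.log (2 * (d : ℝ) + 1)) <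
            ∑ j ∈ Finset.Icc (n i + N + 1) (n i + N + k), xi M₀ M₁ ω j) ∧
        (∀ k : ℕ, 1 ≤ k →
          (k : ℝ) * (M₁ + lam + Real.log (2 * (d : ℝ) + 1)) <
            ∑ j ∈ Finset.Icc (n i - N - k + 1) (n i - N), xi M₀ M₁ ω j) :=
  statement12_general d M₀ M₁ hM₁ P hP lam hlam hlam' N

end BKpaper
end
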